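/- arXiv:2305.13838 — 13 statements merged into one kernel-verified Lean document; each statement's English description precedes it below -/
import Mathlib

section
/- Let q be a prime power and n ≥ 2. If X is a set of points of PG(n,q) such that no four points of X are coplanar (a 4-general set), then |X| ≤ (√(8q^{n+1} + q² − 6q + 1) + q − 3) / (2(q−1)). -/
/-!
Choose a representative vector for each point of `X`. Since any four points of `X` are
independent, the linear combinations of these representatives with at most two nonzero
coefficients are pairwise distinct vectors: the difference of two of them involves at most four
points. Counting them gives `1 + |X|(q-1) + C(|X|,2)(q-1)^2 ≤ q^(n+1)` (for `|X| ≤ 3` it is just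
`1 + 3(q-1) + 3(q-1)^2 ≤ q^3`), and solving this quadratic inequality for `|X|` gives the bound.
-/

open Finset
open scoped LinearAlgebra.Projectivization

section HammingSphere
variable {ι α : Type*} [Fintype ι] [DecidableEq ι] [Fintype α] [DecidableEq α] [Zero α]

theorem filter_support_eq_piFinset (s : Finset ι) :
    ({c : ι → α | ({i | c i ≠ 0} : Finset ι) = s} : Finset (ι → α)) =
      Fintype.piFinset fun i => if i ∈ s then {0}ᶜ else {0} := by
  ext c
  simp only [mem_filter, mem_univ, true_and, Fintype.mem_piFinset, Finset.ext_iff]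
  refine forall_congr' fun i => ?_
  split_ifs with hi <;> simp [hi]

theorem card_filter_support_eq (s : Finset ι) :
    #({c : ι → α | ({i | c i ≠ 0} : Finset ι) = s} : Finset (ι → α)) =
      (Fintype.card α - 1) ^ #s := by
  rw [filter_support_eq_piFinset, Fintype.card_piFinset]
  simp [apply_ite, card_compl]

theorem card_filter_hammingNorm_eq (k : ℕ) :
    #{c : ι → α | hammingNorm c = k} = (Fintype.card ι).choose k * (Fintype.card α - 1) ^ k := by
  rw [card_eq_sum_card_fiberwise (f := fun c => ({i | c i ≠ 0} : Finset ι))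
    (t := powersetCard k univ) fun c hc => by simpa [mem_powersetCard, hammingNorm] using hc]
  have hfiber : ∀ s ∈ powersetCard k (univ : Finset ι),
      #{c ∈ ({c : ι → α | hammingNorm c = k} : Finset (ι → α)) |
        ({i | c i ≠ 0} : Finset ι) = s} = (Fintype.card α - 1) ^ k := by
    intro s hs
    rw [mem_powersetCard] at hs
    rw [filter_filter, ← hs.2, ← card_filter_support_eq]
    congr 1
    refine filter_congr fun c _ => and_iff_right_of_imp fun h => ?_
    rw [hammingNorm, h]
  rw [sum_congr rfl hfiber, sum_const, card_powersetCard, card_univ, smul_eq_mul]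

theorem card_filter_hammingNorm_le (r : ℕ) :
    #{c : ι → α | hammingNorm c ≤ r} =
      ∑ k ∈ range (r + 1), (Fintype.card ι).choose k * (Fintype.card α - 1) ^ k := by
  rw [card_eq_sum_card_fiberwise (f := hammingNorm) (t := range (r + 1))
    fun c hc => by simpa [Nat.lt_succ_iff] using hc]
  refine sum_congr rfl fun k hk => ?_
  rw [mem_range, Nat.lt_succ_iff] at hk
  rw [filter_filter, ← card_filter_hammingNorm_eq]
  congr 1
  exact filter_congr fun c _ => and_iff_right_of_imp fun h => h ▸ hk

end HammingSphere

section LinearCombination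
variable {ι R V : Type*} [Fintype ι] [Ring R] [DecidableEq R] [AddCommGroup V] [Module R V]

theorem Fintype.linearCombination_injOn_hammingNorm_le {v : ι → V} {k : ℕ}
    (hv : ∀ c : ι → R, hammingNorm c ≤ 2 * k → Fintype.linearCombination R v c = 0 → c = 0) :
    Set.InjOn (Fintype.linearCombination R v) {c | hammingNorm c ≤ k} := by
  intro c hc c' hc' h
  have hnorm : hammingNorm (-c + c') ≤ 2 * k := by
    rw [← hammingDist_eq_hammingNorm]
    calc hammingDist c c' ≤ hammingDist c 0 + hammingDist 0 c' := hammingDist_triangle _ _ _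
      _ ≤ 2 * k := by
        rw [hammingDist_zero_right, hammingDist_zero_left, two_mul]
        exact add_le_add hc hc'
  exact neg_add_eq_zero.mp (hv _ hnorm (by rw [map_add, map_neg, h, neg_add_cancel]))

theorem eq_zero_of_hammingNorm_le_four_of_linearCombination_eq_zero {v : ι → V}
    (hι : 4 ≤ Fintype.card ι)
    (h4 : ∀ a b c d : ι, a ≠ b → a ≠ c → a ≠ d → b ≠ c → b ≠ d → c ≠ d →
      LinearIndependent R ![v a, v b, v c, v d])
    {f : ι → R} (hf : hammingNorm f ≤ 4) (h0 : Fintype.linearCombination R v f = 0) : f = 0 := by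
  classical
  obtain ⟨t, hsupp, -, ht⟩ := exists_subsuperset_card_eq (subset_univ {i | f i ≠ 0}) hf
    (by rwa [card_univ])
  obtain ⟨a, b, c, d, hab, hac, had, hbc, hbd, hcd, rfl⟩ := card_eq_four.mp ht
  have hsum : f a • v a + f b • v b + f c • v c + f d • v d = 0 := by
    have hout : ∀ i ∉ ({a, b, c, d} : Finset ι), f i • v i = 0 := fun i hi => by
      rw [of_not_not fun h : f i ≠ 0 => hi (hsupp (by simpa using h)), zero_smul]
    rw [Fintype.linearCombination_apply, ← sum_subset (subset_univ _) fun i _ => hout i] at h0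
    simpa [sum_insert, hab, hac, had, hbc, hbd, hcd, add_assoc] using h0
  have hcoef := Fintype.linearIndependent_iff.mp (h4 a b c d hab hac had hbc hbd hcd)
    ![f a, f b, f c, f d] (by simpa [Fin.sum_univ_four] using hsum)
  funext i
  by_contra hi
  have hmem : i ∈ ({a, b, c, d} : Finset ι) := hsupp (by simpa using hi)
  simp only [mem_insert, mem_singleton] at hmem
  rcases hmem with rfl | rfl | rfl | rfl
  exacts [hi (hcoef 0), hi (hcoef 1), hi (hcoef 2), hi (hcoef 3)]

end LinearCombination

theorem sum_range_three_choose_mul_pow_le {m : ℕ} (hm : m ≤ 3) (x : ℕ) :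
    ∑ k ∈ range 3, m.choose k * x ^ k ≤ (x + 1) ^ 3 :=
  calc ∑ k ∈ range 3, m.choose k * x ^ k ≤ ∑ k ∈ range 3, (3).choose k * x ^ k := by gcongr
    _ ≤ (x + 1) ^ 3 := by
        simp [sum_range_succ]
        ring_nf
        omega

theorem le_of_one_add_mul_add_choose_two_le {m q Q : ℝ} (hq : 1 < q)
    (h : 1 + m * (q - 1) + m * (m - 1) / 2 * (q - 1) ^ 2 ≤ Q) :
    m ≤ (Real.sqrt (8 * Q + q ^ 2 - 6 * q + 1) + q - 3) / (2 * (q - 1)) := by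
  have hsq : (2 * ((q - 1) * m) + 3 - q) ^ 2 ≤ 8 * Q + q ^ 2 - 6 * q + 1 := by nlinarith
  rw [le_div_iff₀ (by linarith)]
  linarith [(le_abs_self _).trans (Real.abs_le_sqrt hsq)]

theorem sum_choose_mul_pow_le_card_of_fourGeneral {F V : Type*} [Field F] [Fintype F]
    [AddCommGroup V] [Module F V] [Fintype V] (hV : 3 ≤ Module.finrank F V)
    (X : Finset (ℙ F V))
    (h4 : ∀ a ∈ X, ∀ b ∈ X, ∀ c ∈ X, ∀ d ∈ X,
      a ≠ b → a ≠ c → a ≠ d → b ≠ c → b ≠ d → c ≠ d →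
      LinearIndependent F ![a.rep, b.rep, c.rep, d.rep]) :
    ∑ k ∈ range 3, (#X).choose k * (Fintype.card F - 1) ^ k ≤ Fintype.card V := by
  classical
  rcases le_or_gt 4 #X with hX | hX
  · have h4' (a b c d : X) (hab : a ≠ b) (hac : a ≠ c) (had : a ≠ d) (hbc : b ≠ c)
        (hbd : b ≠ d) (hcd : c ≠ d) : LinearIndependent F ![a.1.rep, b.1.rep, c.1.rep, d.1.rep] :=
      h4 a a.2 b b.2 c c.2 d d.2 (Subtype.val_injective.ne hab) (Subtype.val_injective.ne hac)
        (Subtype.val_injective.ne had) (Subtype.val_injective.ne hbc)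
        (Subtype.val_injective.ne hbd) (Subtype.val_injective.ne hcd)
    rw [← Fintype.card_coe X, ← card_filter_hammingNorm_le, ← card_univ]
    exact card_le_card_of_injOn _ (fun _ _ => mem_univ _) (by
      simpa using Fintype.linearCombination_injOn_hammingNorm_le fun f hf =>
        eq_zero_of_hammingNorm_le_four_of_linearCombination_eq_zero
          (by rwa [Fintype.card_coe]) h4' hf)
  · calc ∑ k ∈ range 3, (#X).choose k * (Fintype.card F - 1) ^ k
        ≤ (Fintype.card F - 1 + 1) ^ 3 := sum_range_three_choose_mul_pow_le (by omega) _
      _ ≤ Fintype.card F ^ Module.finrank F V := by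
        rw [Nat.sub_add_cancel Fintype.card_pos]
        exact Nat.pow_le_pow_right Fintype.card_pos hV
      _ = Fintype.card V := Module.card_eq_pow_finrank.symm

/-- upper bound on the size of a 4-general set in PG(n,q). -/
theorem stmt0 (q n : ℕ) (hn : 2 ≤ n) (F : Type) [Field F] [Fintype F]
    (hq : Fintype.card F = q)
    (X : Finset (Projectivization F (Fin (n + 1) → F)))
    (h4 : ∀ a ∈ X, ∀ b ∈ X, ∀ c ∈ X, ∀ d ∈ X,
      a ≠ b → a ≠ c → a ≠ d → b ≠ c → b ≠ d → c ≠ d →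
      LinearIndependent F ![a.rep, b.rep, c.rep, d.rep]) :
    (X.card : ℝ) ≤
      (Real.sqrt (8 * (q : ℝ) ^ (n + 1) + q ^ 2 - 6 * q + 1) + q - 3) / (2 * ((q : ℝ) - 1)) := by
  have hq1 : 1 < q := hq ▸ Fintype.one_lt_card
  have hcount := sum_choose_mul_pow_le_card_of_fourGeneral (by simp; omega) X h4
  rw [Fintype.card_fun, Fintype.card_fin, hq] at hcount
  apply le_of_one_add_mul_add_choose_two_le (by exact_mod_cast hq1)
  have hcast := (Nat.cast_le (α := ℝ)).mpr hcount
  simpa [sum_range_succ, Nat.cast_choose_two, Nat.cast_sub hq1.le] using hcast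
end

section
/- Suppose x is real, q > 1, and x³ − 3·((q−2)/(q−1))·x² + ((2q²−7q+11)/(q−1)²)·x − 6·((q^{n+1}−1)/(q−1)³) ≥ 0 where n ≥ 2 and q ≥ 2 is an integer. Then x > (∛(6q^{n+1}−q²−q + (q²−5q+1)·∛(6q^{n+1}−q²−q)))/(q−1) + (q−2)/(q−1). -/
/-!
Substituting `z = (q - 1) x - (q - 2)` turns the cubic into the depressed cubic
`z ^ 3 - A z - M` with `A = q ^ 2 - 5 q + 1` and `M = 6 q ^ (n + 1) - q ^ 2 - q`.
With `m = ∛M` and `B = ∛(M + A m)` its value at `B` is `A (m - B)`, which is negative because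
`B - m` has the sign of `A ≠ 0`. Past `B` the cubic is increasing once `4 A ≤ 3 B ^ 2`, which
holds because `M ≥ 5 q ^ 3` makes `m` large compared with `q`; so every `z` at which the cubic is
nonnegative exceeds `B`.
-/

theorem depressed_cubic_le_of_le {A B z : ℝ} (hA : 4 * A ≤ 3 * B ^ 2) (hz : z ≤ B) :
    z ^ 3 - A * z ≤ B ^ 3 - A * B := by
  have hfactor : 0 ≤ z ^ 2 + z * B + B ^ 2 - A := by nlinarith [sq_nonneg (2 * z + B)]
  nlinarith [mul_nonneg (sub_nonneg.2 hz) hfactor]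

theorem mul_sub_pos_of_pow_three_eq {A B m : ℝ} (hA : A ≠ 0) (hm : 0 < m)
    (hB : B ^ 3 = m ^ 3 + A * m) : 0 < A * (B - m) := by
  have hsq : 0 < B ^ 2 + B * m + m ^ 2 := by nlinarith [sq_nonneg (2 * B + m)]
  have hprod : A * (B - m) * (B ^ 2 + B * m + m ^ 2) = A ^ 2 * m := by linear_combination A * hB
  have : 0 < A ^ 2 * m := by positivity
  exact pos_of_mul_pos_left (hprod ▸ this) hsq.le

theorem lt_of_depressed_cubic_nonneg {A B m z : ℝ} (hA₀ : A ≠ 0) (hm : 0 < m)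
    (hA : 4 * A ≤ 3 * m ^ 2) (hB : B ^ 3 = m ^ 3 + A * m) (hz : 0 ≤ z ^ 3 - A * z - m ^ 3) :
    B < z := by
  have hAB := mul_sub_pos_of_pow_three_eq hA₀ hm hB
  have hAB' : 4 * A ≤ 3 * B ^ 2 := by
    rcases le_or_gt A 0 with hA' | hA'
    · nlinarith [sq_nonneg B]
    · have hmB : m < B := by nlinarith
      nlinarith
  by_contra! hzB
  nlinarith [depressed_cubic_le_of_le hAB' hzB]

theorem rpow_one_div_three_pow_three {x : ℝ} (hx : 0 ≤ x) : (x ^ ((1 : ℝ) / 3)) ^ 3 = x := by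
  simpa using Real.rpow_inv_natCast_pow hx (n := 3) (by norm_num)

theorem natCast_sq_sub_five_mul_add_one_ne_zero (q : ℕ) : (q : ℝ) ^ 2 - 5 * q + 1 ≠ 0 := by
  rcases le_or_gt q 4 with hq | hq
  · interval_cases q <;> norm_num
  · have : (5 : ℝ) ≤ q := by exact_mod_cast hq
    nlinarith

theorem five_mul_pow_three_le {q : ℝ} {n : ℕ} (hq : 2 ≤ q) (hn : 2 ≤ n) :
    5 * q ^ 3 ≤ 6 * q ^ (n + 1) - q ^ 2 - q := by
  have : q ^ 3 ≤ q ^ (n + 1) := pow_le_pow_right₀ (by linarith) (by omega)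
  nlinarith

theorem three_mul_le_two_mul_of_five_mul_pow_three_le {q m : ℝ} (hq : 0 ≤ q)
    (h : 5 * q ^ 3 ≤ m ^ 3) : 3 * q ≤ 2 * m := by
  have hm : 0 ≤ m := by
    by_contra! hm
    nlinarith [pow_pos (neg_pos.2 hm) 3, pow_nonneg hq 3]
  refine le_of_pow_le_pow_left₀ (n := 3) (by norm_num) (by linarith) ?_
  nlinarith [pow_nonneg hq 3]

theorem pow_three_mul_cubic_eq {q x P : ℝ} (hq : q ≠ 1) :
    (q - 1) ^ 3 * (x ^ 3 - 3 * ((q - 2) / (q - 1)) * x ^ 2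
        + ((2 * q ^ 2 - 7 * q + 11) / (q - 1) ^ 2) * x - 6 * ((P - 1) / (q - 1) ^ 3))
      = ((q - 1) * x - (q - 2)) ^ 3 - (q ^ 2 - 5 * q + 1) * ((q - 1) * x - (q - 2))
        - (6 * P - q ^ 2 - q) := by
  have : q - 1 ≠ 0 := sub_ne_zero.2 hq
  field_simp
  ring

/-- algebraic core of the lower bound on complete 4-general sets. -/
theorem stmt2 (q n : ℕ) (hn : 2 ≤ n) (hq : 2 ≤ q) (x : ℝ)
    (h : x ^ 3 - 3 * (((q : ℝ) - 2) / ((q : ℝ) - 1)) * x ^ 2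
        + ((2 * (q : ℝ) ^ 2 - 7 * q + 11) / ((q : ℝ) - 1) ^ 2) * x
        - 6 * (((q : ℝ) ^ (n + 1) - 1) / ((q : ℝ) - 1) ^ 3) ≥ 0) :
    x > (6 * (q : ℝ) ^ (n + 1) - q ^ 2 - q
          + ((q : ℝ) ^ 2 - 5 * q + 1) *
            (6 * (q : ℝ) ^ (n + 1) - q ^ 2 - q) ^ ((1 : ℝ) / 3)) ^ ((1 : ℝ) / 3)
        / ((q : ℝ) - 1) + ((q : ℝ) - 2) / ((q : ℝ) - 1) := by
  have hq' : (2 : ℝ) ≤ q := by exact_mod_cast hq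
  set M : ℝ := 6 * (q : ℝ) ^ (n + 1) - q ^ 2 - q
  set A : ℝ := (q : ℝ) ^ 2 - 5 * q + 1
  set m : ℝ := M ^ ((1 : ℝ) / 3)
  have hM : 5 * (q : ℝ) ^ 3 ≤ M := five_mul_pow_three_le hq' hn
  have hm3 : m ^ 3 = M := rpow_one_div_three_pow_three (by nlinarith)
  have hqm : 3 * (q : ℝ) ≤ 2 * m :=
    three_mul_le_two_mul_of_five_mul_pow_three_le (by linarith) (hm3 ▸ hM)
  have hBM : 0 ≤ M + A * m := by
    have : 0 ≤ m ^ 2 + A := by nlinarith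
    nlinarith [mul_nonneg (by linarith : (0 : ℝ) ≤ m) this]
  have hB := rpow_one_div_three_pow_three hBM
  have hz : 0 ≤ ((q - 1) * x - (q - 2)) ^ 3 - A * ((q - 1) * x - (q - 2)) - m ^ 3 := by
    rw [hm3, ← pow_three_mul_cubic_eq (by linarith)]
    exact mul_nonneg (pow_nonneg (by linarith) 3) h
  have hBz := lt_of_depressed_cubic_nonneg (natCast_sq_sub_five_mul_add_one_ne_zero q)
    (by linarith) (by nlinarith) (hB.trans (by rw [hm3])) hz
  rw [gt_iff_lt, ← add_div, div_lt_iff₀ (by linarith)]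
  linarith
end

section
/- Let q = 2^r with q ≡ 1 (mod 3). The affine cubic curve X²Y + XY² + X² + Y² + XY = 0 has exactly q − 3 points in AG(2,q), i.e., there are exactly q − 3 pairs (x,y) ∈ F_q² satisfying x²y + xy² + x² + y² + xy = 0. -/
/-!
Every point of the curve other than the origin has `x ≠ 0`, and the line `y = t x` meets the
curve outside the origin exactly when `t (t + 1) (t² + t + 1) ≠ 0`, in the single point with
`x = -(t² + t + 1) / (t (t + 1))`; so the slope `y / x` counts the curve. In characteristic 2
that product is `t⁴ - t`, whose roots are `0` and the three cube roots of unity, all in `F_q`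
since `3 ∣ q - 1`. Hence the curve has `1 + (q - 4)` points.
-/

open Finset

section NodalCubic

variable {F : Type*} [Field F]

def nodalCubic (x y : F) : F := x ^ 2 * y + x * y ^ 2 + x ^ 2 + y ^ 2 + x * y

def nodalParam (t : F) : F := -(t ^ 2 + t + 1) / (t * (t + 1))

lemma nodalCubic_zero_left (y : F) : nodalCubic 0 y = y ^ 2 := by
  simp [nodalCubic]

lemma nodalCubic_mul_right (x t : F) :
    nodalCubic x (t * x) = x ^ 2 * (x * (t * (t + 1)) + (t ^ 2 + t + 1)) := by
  unfold nodalCubic; ring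

lemma nodalCubic_mul_right_eq_zero_iff {x t : F} (hx : x ≠ 0) :
    nodalCubic x (t * x) = 0 ↔ t * (t + 1) * (t ^ 2 + t + 1) ≠ 0 ∧ x = nodalParam t := by
  rw [nodalCubic_mul_right, mul_eq_zero, or_iff_right (pow_ne_zero 2 hx), nodalParam]
  constructor
  · intro h
    have hden : t * (t + 1) ≠ 0 := by
      intro h0
      have : (1 : F) = 0 := by linear_combination h - (x + 1) * h0
      exact one_ne_zero this
    have hnum : t ^ 2 + t + 1 ≠ 0 := by
      intro h0
      have : x * (t * (t + 1)) = 0 := by linear_combination h - h0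
      exact (mul_ne_zero hx hden) this
    exact ⟨mul_ne_zero hden hnum, by rw [eq_div_iff hden]; linear_combination h⟩
  · rintro ⟨hgood, rfl⟩
    rw [div_mul_cancel₀ _ (left_ne_zero_of_mul hgood), neg_add_cancel]

lemma nodalParam_ne_zero {t : F} (ht : t * (t + 1) * (t ^ 2 + t + 1) ≠ 0) :
    nodalParam t ≠ 0 :=
  div_ne_zero (neg_ne_zero.mpr (right_ne_zero_of_mul ht)) (left_ne_zero_of_mul ht)

lemma fst_ne_zero_of_nodalCubic_eq_zero {x y : F} (h : nodalCubic x y = 0)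
    (hxy : (x, y) ≠ (0, 0)) : x ≠ 0 := by
  rintro rfl
  rw [nodalCubic_zero_left, sq_eq_zero_iff] at h
  exact hxy (by rw [h])

theorem card_nodalCubic_zeros [Fintype F] [DecidableEq F] :
    #{p : F × F | nodalCubic p.1 p.2 = 0} = #{t : F | t * (t + 1) * (t ^ 2 + t + 1) ≠ 0} + 1 := by
  have horigin : ((0 : F), (0 : F)) ∈ ({p : F × F | nodalCubic p.1 p.2 = 0} : Finset _) := by
    simp [nodalCubic_zero_left]
  rw [← card_erase_add_one horigin]
  congr 1
  apply card_nbij' (fun p ↦ p.2 / p.1) (fun t ↦ (nodalParam t, t * nodalParam t))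
  · rintro ⟨x, y⟩ hp
    simp only [coe_erase, coe_filter, mem_univ, true_and, Set.mem_sdiff, Set.mem_ofPred_eq,
      Set.mem_singleton_iff] at hp ⊢
    have hx := fst_ne_zero_of_nodalCubic_eq_zero hp.1 hp.2
    rw [← div_mul_cancel₀ y hx, nodalCubic_mul_right_eq_zero_iff hx] at hp
    exact hp.1.1
  · intro t ht
    simp only [coe_erase, coe_filter, mem_univ, true_and, Set.mem_sdiff, Set.mem_ofPred_eq,
      Set.mem_singleton_iff, Prod.mk.injEq, not_and] at ht ⊢
    have hx := nodalParam_ne_zero ht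
    exact ⟨(nodalCubic_mul_right_eq_zero_iff hx).mpr ⟨ht, rfl⟩, fun h ↦ absurd h hx⟩
  · rintro ⟨x, y⟩ hp
    simp only [coe_erase, coe_filter, mem_univ, true_and, Set.mem_sdiff, Set.mem_ofPred_eq,
      Set.mem_singleton_iff] at hp
    have hx := fst_ne_zero_of_nodalCubic_eq_zero hp.1 hp.2
    rw [← div_mul_cancel₀ y hx, nodalCubic_mul_right_eq_zero_iff hx] at hp
    simp only [← hp.1.2, div_mul_cancel₀ y hx]
  · intro t ht
    simp only [coe_filter, mem_univ, true_and, Set.mem_ofPred_eq] at ht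
    exact mul_div_cancel_right₀ t (nodalParam_ne_zero ht)

end NodalCubic

lemma card_filter_pow_four_eq_self {R : Type*} [CommRing R] [IsDomain R] [Fintype R]
    [DecidableEq R] {ζ : R} (hζ : IsPrimitiveRoot ζ 3) : #{t : R | t ^ 4 = t} = 4 := by
  have h : ({t : R | t ^ 4 = t} : Finset R) = insert 0 (Polynomial.nthRootsFinset 3 (1 : R)) := by
    ext t
    simp only [mem_filter, mem_univ, true_and, mem_insert, Polynomial.mem_nthRootsFinset three_pos]
    constructor
    · intro h
      have : t * (t ^ 3 - 1) = 0 := by linear_combination h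
      exact (mul_eq_zero.mp this).imp_right sub_eq_zero.mp
    · rintro (rfl | h)
      · simp
      · rw [pow_succ, h, one_mul]
  rw [h, card_insert_of_notMem (by simp [Polynomial.mem_nthRootsFinset]), hζ.card_nthRootsFinset]

lemma exists_isPrimitiveRoot_of_dvd_card_sub_one {K : Type*} [Field K] [Fintype K] {p : ℕ}
    [Fact p.Prime] (hp : p ∣ Fintype.card K - 1) : ∃ ζ : K, IsPrimitiveRoot ζ p := by
  classical
  rw [← Fintype.card_units] at hp
  obtain ⟨g, hg⟩ := exists_prime_orderOf_dvd_card p hp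
  exact ⟨g, IsPrimitiveRoot.coe_units_iff.mpr (hg ▸ IsPrimitiveRoot.orderOf g)⟩

lemma CharTwo.mul_add_one_mul_sq_add_add_one {R : Type*} [CommRing R] [CharP R 2] (t : R) :
    t * (t + 1) * (t ^ 2 + t + 1) = t ^ 4 - t := by
  linear_combination (t ^ 3 + t ^ 2 + t) * CharTwo.two_eq_zero (R := R)

theorem stmt3_general (r : ℕ) (F : Type) [Field F] [Fintype F] [DecidableEq F]
    (hcard : Fintype.card F = 2 ^ r) (hmod : 2 ^ r % 3 = 1) :
    (Finset.univ.filter (fun p : F × F =>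
        p.1 ^ 2 * p.2 + p.1 * p.2 ^ 2 + p.1 ^ 2 + p.2 ^ 2 + p.1 * p.2 = 0)).card
      = 2 ^ r - 3 := by
  have : CharP F 2 := charP_of_card_eq_prime_pow hcard
  obtain ⟨ζ, hζ⟩ := exists_isPrimitiveRoot_of_dvd_card_sub_one (K := F) (p := 3)
    (by rw [hcard]; omega)
  have hcurve := card_nodalCubic_zeros (F := F)
  have hroots : #{t : F | t ^ 4 = t} = 4 := card_filter_pow_four_eq_self hζ
  have hsplit := card_filter_add_card_filter_not (s := univ) (fun t : F ↦ t ^ 4 = t)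
  simp_rw [CharTwo.mul_add_one_mul_sq_add_add_one, sub_ne_zero, ne_eq] at hcurve
  rw [card_univ, hcard] at hsplit
  unfold nodalCubic at hcurve
  omega

/-- the nodal cubic X²Y + XY² + X² + Y² + XY = 0 has exactly q − 3
affine points over F_q, q = 2^r ≡ 1 (mod 3). -/
theorem stmt3 (r : ℕ) (hr : r ≠ 0) (F : Type) [Field F] [Fintype F] [DecidableEq F]
    (hcard : Fintype.card F = 2 ^ r) (hmod : 2 ^ r % 3 = 1) :
    (Finset.univ.filter (fun p : F × F =>
        p.1 ^ 2 * p.2 + p.1 * p.2 ^ 2 + p.1 ^ 2 + p.2 ^ 2 + p.1 * p.2 = 0)).card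
      = 2 ^ r - 3 :=
  stmt3_general r F hcard hmod
end

section
/- Let d ≥ 2, q = 3, and let F be the field with 3^{2d} elements. Suppose x ∈ F satisfies x^{3^d+1} = 1 and x² ≠ 1, and let a, b ∈ {1, −1} ⊆ F_3. Then a + bx does not satisfy (a + bx)^{3^d+1} = 1 unless the resulting constraint x = 1/(ab) holds, which contradicts x² ≠ 1. Equivalently: there are no a,b ∈ F_3\{0} and x ∈ F with x^{3^d+1} = 1, x² ≠ 1, (a+bx)² ≠ 1, (a+bx)² ≠ x², and (a+bx)^{3^d+1} = 1. -/
/-- no three collinear points on θ₀ in the cyclic model of PG(2d−1,3). -/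
theorem stmt5 (d : ℕ) (hd : 2 ≤ d) (F : Type) [Field F] [Fintype F]
    (hcard : Fintype.card F = 3 ^ (2 * d)) :
    ¬ ∃ a b x : F, (a = 1 ∨ a = -1) ∧ (b = 1 ∨ b = -1) ∧
      x ^ (3 ^ d + 1) = 1 ∧ x ^ 2 ≠ 1 ∧
      (a + b * x) ^ 2 ≠ 1 ∧ (a + b * x) ^ 2 ≠ x ^ 2 ∧
      (a + b * x) ^ (3 ^ d + 1) = 1 := by
  rintro ⟨a, b, x, ha, hb, hx1, hx2, -, -, h5⟩
  -- characteristic 3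
  have h3 : (3 : F) = 0 := by
    have hc := FiniteField.cast_card_eq_zero F
    rw [hcard] at hc
    push_cast at hc
    exact pow_eq_zero_iff (by omega) |>.mp hc
  have hring : ringChar F = 3 := CharP.ringChar_of_prime_eq_zero (by norm_num) h3
  haveI : CharP F 3 := hring ▸ ringChar.charP F
  have ho : Odd (3 ^ d) := Odd.pow (by decide)
  have hax : a ^ (3 ^ d) = a := by
    rcases ha with rfl | rfl
    · simp
    · exact ho.neg_one_pow
  have hbx : b ^ (3 ^ d) = b := by
    rcases hb with rfl | rfl
    · simp
    · exact ho.neg_one_pow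
  set y := x ^ (3 ^ d) with hy
  have hyx : y * x = 1 := by rw [hy, ← pow_succ]; exact hx1
  have hfrob : (a + b * x) ^ (3 ^ d) = a + b * y := by
    rw [add_pow_char_pow, mul_pow, hax, hbx]
  have h : (a + b * y) * (a + b * x) = 1 := by
    rw [← hfrob, ← pow_succ]; exact h5
  apply hx2
  rcases ha with rfl | rfl <;> rcases hb with rfl | rfl
  · have key : (x - 1) ^ 2 = 0 := by
      linear_combination x * h - (1 + x) * hyx - x * h3
    have h1 : x - 1 = 0 := pow_eq_zero_iff (n := 2) (by norm_num) |>.mp key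
    linear_combination (x + 1) * h1
  · have key : (x + 1) ^ 2 = 0 := by
      linear_combination (-x) * h - (1 - x) * hyx + x * h3
    have h1 : x + 1 = 0 := pow_eq_zero_iff (n := 2) (by norm_num) |>.mp key
    linear_combination (x - 1) * h1
  · have key : (x + 1) ^ 2 = 0 := by
      linear_combination (-x) * h - (1 - x) * hyx + x * h3
    have h1 : x + 1 = 0 := pow_eq_zero_iff (n := 2) (by norm_num) |>.mp key
    linear_combination (x - 1) * h1
  · have key : (x - 1) ^ 2 = 0 := by
      linear_combination x * h - (1 + x) * hyx - x * h3
    have h1 : x - 1 = 0 := pow_eq_zero_iff (n := 2) (by norm_num) |>.mp key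
    linear_combination (x + 1) * h1
end

section
/- Let d ≥ 2 and F = F_{3^{2d}}. There are no a, b, c ∈ F_3 \ {0} and x, y ∈ F with x^{3^d+1} = y^{3^d+1} = 1, x² ≠ 1, y² ≠ 1, x² ≠ y², such that z = a + bx + cy satisfies z^{3^d+1} = 1 together with z² ≠ 1, z² ≠ x², z² ≠ y². -/
/-!
The `q`-th power map, `q = 3 ^ d`, is a ring endomorphism fixing `±1`, and it inverts every
`x` with `x ^ (q + 1) = 1`. So for `z = a + b x + c y` the condition `z ^ (q + 1) = 1` reads
`(a + b x⁻¹ + c y⁻¹) z = 1`, and multiplying out, this polynomial relation factors as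
`(x + b c y) (y + a c) (1 + a b x) = 0`. Each factor forces `x ^ 2 = y ^ 2`, `y ^ 2 = 1` or
`x ^ 2 = 1`.
-/

section CommRing

variable {R : Type*} [CommRing R]

theorem sq_eq_one_of_eq_one_or_eq_neg_one {a : R} (ha : a = 1 ∨ a = -1) : a ^ 2 = 1 := by
  rcases ha with rfl | rfl <;> simp

theorem pow_char_pow_of_eq_one_or_eq_neg_one {p n : ℕ} [Fact p.Prime] [CharP R p] {a : R}
    (ha : a = 1 ∨ a = -1) : a ^ p ^ n = a := by
  rcases ha with rfl | rfl
  · exact one_pow _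
  · exact neg_one_pow_char_pow R p n

theorem add_mul_add_mul_pow_char_pow {p n : ℕ} [Fact p.Prime] [CharP R p] {a b c : R}
    (ha : a = 1 ∨ a = -1) (hb : b = 1 ∨ b = -1) (hc : c = 1 ∨ c = -1) (x y : R) :
    (a + b * x + c * y) ^ p ^ n = a + b * x ^ p ^ n + c * y ^ p ^ n := by
  rw [add_pow_char_pow, add_pow_char_pow, mul_pow, mul_pow,
    pow_char_pow_of_eq_one_or_eq_neg_one ha, pow_char_pow_of_eq_one_or_eq_neg_one hb,
    pow_char_pow_of_eq_one_or_eq_neg_one hc]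

theorem mul_mul_eq_zero_of_add_mul_add_mul_mul_eq_one {a b c x y x' y' : R}
    (ha : a ^ 2 = 1) (hb : b ^ 2 = 1) (hc : c ^ 2 = 1) (hx : x' * x = 1) (hy : y' * y = 1)
    (hz : (a + b * x' + c * y') * (a + b * x + c * y) = 1) :
    (x + b * c * y) * (y + a * c) * (1 + a * b * x) = 0 := by
  have hxy : (a + b * x + c * y) * (a * x * y + b * y + c * x) = x * y := by
    linear_combination x * y * hz - (a + b * x + c * y) * b * y * hx
      - (a + b * x + c * y) * c * x * hy
  linear_combination hxy + a * b * y * hc + b * c * x ^ 2 * ha + a * c * x * y ^ 2 * hb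
    + x * y * (a ^ 2 - 1) * hb + x * y * (a ^ 2 * b ^ 2 - 1) * hc

end CommRing

theorem sq_eq_one_or_sq_eq_sq_of_pow_char_pow_succ_eq_one {F : Type*} [Field F] {p n : ℕ}
    [Fact p.Prime] [CharP F p] {a b c x y : F}
    (ha : a = 1 ∨ a = -1) (hb : b = 1 ∨ b = -1) (hc : c = 1 ∨ c = -1)
    (hx : x ^ (p ^ n + 1) = 1) (hy : y ^ (p ^ n + 1) = 1)
    (hz : (a + b * x + c * y) ^ (p ^ n + 1) = 1) :
    x ^ 2 = 1 ∨ y ^ 2 = 1 ∨ x ^ 2 = y ^ 2 := by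
  rw [pow_succ] at hx hy hz
  rw [add_mul_add_mul_pow_char_pow ha hb hc] at hz
  have ha2 := sq_eq_one_of_eq_one_or_eq_neg_one ha
  have hb2 := sq_eq_one_of_eq_one_or_eq_neg_one hb
  have hc2 := sq_eq_one_of_eq_one_or_eq_neg_one hc
  rcases mul_eq_zero.mp (mul_mul_eq_zero_of_add_mul_add_mul_mul_eq_one ha2 hb2 hc2 hx hy hz)
    with h | h
  · rcases mul_eq_zero.mp h with h | h
    · exact .inr (.inr (by linear_combination (x - b * c * y) * h + y ^ 2 * c ^ 2 * hb2
        + y ^ 2 * hc2))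
    · exact .inr (.inl (by linear_combination (y - a * c) * h + c ^ 2 * ha2 + hc2))
  · exact .inl (by linear_combination (a * b * x - 1) * h - x ^ 2 * b ^ 2 * ha2 - x ^ 2 * hb2)

theorem stmt6_general (d : ℕ) (F : Type) [Field F] [Fintype F]
    (hcard : Fintype.card F = 3 ^ (2 * d)) :
    ¬ ∃ a b c x y : F, (a = 1 ∨ a = -1) ∧ (b = 1 ∨ b = -1) ∧ (c = 1 ∨ c = -1) ∧
      x ^ (3 ^ d + 1) = 1 ∧ y ^ (3 ^ d + 1) = 1 ∧
      x ^ 2 ≠ 1 ∧ y ^ 2 ≠ 1 ∧ x ^ 2 ≠ y ^ 2 ∧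
      (a + b * x + c * y) ^ (3 ^ d + 1) = 1 ∧
      (a + b * x + c * y) ^ 2 ≠ 1 ∧
      (a + b * x + c * y) ^ 2 ≠ x ^ 2 ∧
      (a + b * x + c * y) ^ 2 ≠ y ^ 2 := by
  rintro ⟨a, b, c, x, y, ha, hb, hc, hx, hy, hx1, hy1, hxy, hz, -⟩
  have : CharP F 3 := charP_of_card_eq_prime_pow hcard
  rcases sq_eq_one_or_sq_eq_sq_of_pow_char_pow_succ_eq_one ha hb hc hx hy hz with h | h | h
  · exact hx1 h
  · exact hy1 h
  · exact hxy h

/-- no four coplanar points on θ₀ in the cyclic model of PG(2d−1,3). -/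
theorem stmt6 (d : ℕ) (hd : 2 ≤ d) (F : Type) [Field F] [Fintype F]
    (hcard : Fintype.card F = 3 ^ (2 * d)) :
    ¬ ∃ a b c x y : F, (a = 1 ∨ a = -1) ∧ (b = 1 ∨ b = -1) ∧ (c = 1 ∨ c = -1) ∧
      x ^ (3 ^ d + 1) = 1 ∧ y ^ (3 ^ d + 1) = 1 ∧
      x ^ 2 ≠ 1 ∧ y ^ 2 ≠ 1 ∧ x ^ 2 ≠ y ^ 2 ∧
      (a + b * x + c * y) ^ (3 ^ d + 1) = 1 ∧
      (a + b * x + c * y) ^ 2 ≠ 1 ∧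
      (a + b * x + c * y) ^ 2 ≠ x ^ 2 ∧
      (a + b * x + c * y) ^ 2 ≠ y ^ 2 :=
  stmt6_general d F hcard
end

section
/- Let d ≥ 2 and let θ₀ = {x ∈ F_{3^{2d}} : x^{3^d+1} = 1}, viewed as a set of points of PG(2d−1,3) via the cyclic model (x and y represent the same point iff x/y ∈ F_3\{0}). Then θ₀ is a set of (3^d+1)/2 points of PG(2d−1,3) no four of which are coplanar. -/
/-!
The Frobenius `u ↦ u ^ 3 ^ d` fixes the coefficients `0, ±1` and inverts the elements of norm
one, so a relation `t = a x + b y + c z` among norm-one elements comes with the relation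
`t⁻¹ = (a x)⁻¹ + (b y)⁻¹ + (c z)⁻¹`. In characteristic 3 the two relations together force
`t = ±x`, `±y` or `±z`. For the count, the norm-one elements are the `(3 ^ d + 1)`-th roots of
unity, of which there are `3 ^ d + 1` since `3 ^ d + 1 ∣ 3 ^ (2 d) - 1`, and squaring
identifies exactly `u` with `-u`.
-/

open Polynomial

section InverseSums

variable {F : Type*} [Field F]

theorem eq_or_eq_or_eq_of_add_add_eq_of_inv_add_inv_add_inv_eq {x y z t : F}
    (hx : x ≠ 0) (hy : y ≠ 0) (hz : z ≠ 0) (ht : t ≠ 0)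
    (h : x + y + z = t) (h' : x⁻¹ + y⁻¹ + z⁻¹ = t⁻¹) : t = x ∨ t = y ∨ t = z := by
  have hsym : t * (x * y + y * z + z * x) = x * y * z := by
    field_simp at h'
    linear_combination h'
  have hprod : (t - x) * (t - y) * (t - z) = 0 := by
    linear_combination (-t ^ 2) * h + hsym
  simp only [mul_eq_zero, sub_eq_zero] at hprod
  tauto

variable [CharP F 3]

theorem sq_eq_or_sq_eq_of_add_eq_of_inv_add_inv_eq {y z t : F} (ht : t ≠ 0)
    (h : y + z = t) (h' : y⁻¹ + z⁻¹ = t⁻¹) : t ^ 2 = y ^ 2 ∨ t ^ 2 = z ^ 2 := by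
  by_cases hy : y = 0
  · simp_all
  by_cases hz : z = 0
  · simp_all
  have h3 : (3 : F) = 0 := by exact_mod_cast CharP.cast_eq_zero F 3
  have hsq : (y + z) ^ 2 = y * z := by
    subst h
    field_simp at h'
    linear_combination h'
  -- in characteristic 3, `(y + z) ^ 2 = y * z` says `(y - z) ^ 2 = 0`, so `t = 2 * y = -y`
  have hyz : y = z := by
    have : (y - z) ^ 2 = 0 := by linear_combination hsq - y * z * h3
    exact sub_eq_zero.mp (pow_eq_zero_iff two_ne_zero |>.mp this)
  left
  subst hyz h
  linear_combination y ^ 2 * h3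

theorem sq_eq_or_sq_eq_or_sq_eq_of_add_add_eq_of_inv_add_inv_add_inv_eq {x y z t : F}
    (ht : t ≠ 0) (h : x + y + z = t) (h' : x⁻¹ + y⁻¹ + z⁻¹ = t⁻¹) :
    t ^ 2 = x ^ 2 ∨ t ^ 2 = y ^ 2 ∨ t ^ 2 = z ^ 2 := by
  by_cases hx : x = 0
  · subst hx
    simp only [zero_add, inv_zero] at h h'
    exact .inr (sq_eq_or_sq_eq_of_add_eq_of_inv_add_inv_eq ht h h')
  by_cases hy : y = 0
  · subst hy
    simp only [add_zero, inv_zero] at h h'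
    have := sq_eq_or_sq_eq_of_add_eq_of_inv_add_inv_eq ht h h'
    tauto
  by_cases hz : z = 0
  · subst hz
    simp only [add_zero, inv_zero] at h h'
    exact (sq_eq_or_sq_eq_of_add_eq_of_inv_add_inv_eq ht h h').imp_right .inl
  rcases eq_or_eq_or_eq_of_add_add_eq_of_inv_add_inv_add_inv_eq hx hy hz ht h h' with
    rfl | rfl | rfl <;> simp

end InverseSums

section Signs

variable {F : Type*} [Field F]

theorem mul_inv_eq_of_eq_zero_or_eq_one_or_eq_neg_one {a : F} (ha : a = 0 ∨ a = 1 ∨ a = -1)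
    (u : F) : (a * u)⁻¹ = a * u⁻¹ := by
  rcases ha with rfl | rfl | rfl <;> simp

theorem sq_eq_sq_of_sq_eq_mul_sq {a u t : F} (ha : a = 0 ∨ a = 1 ∨ a = -1) (ht : t ≠ 0)
    (h : t ^ 2 = (a * u) ^ 2) : t ^ 2 = u ^ 2 := by
  rcases ha with rfl | rfl | rfl <;> simp_all

theorem sq_eq_or_sq_eq_or_sq_eq_of_mul_add_mul_add_mul_eq [CharP F 3] {a b c x y z t : F}
    (ha : a = 0 ∨ a = 1 ∨ a = -1) (hb : b = 0 ∨ b = 1 ∨ b = -1) (hc : c = 0 ∨ c = 1 ∨ c = -1)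
    (ht : t ≠ 0) (h : a * x + b * y + c * z = t) (h' : a * x⁻¹ + b * y⁻¹ + c * z⁻¹ = t⁻¹) :
    t ^ 2 = x ^ 2 ∨ t ^ 2 = y ^ 2 ∨ t ^ 2 = z ^ 2 := by
  rw [← mul_inv_eq_of_eq_zero_or_eq_one_or_eq_neg_one ha,
    ← mul_inv_eq_of_eq_zero_or_eq_one_or_eq_neg_one hb,
    ← mul_inv_eq_of_eq_zero_or_eq_one_or_eq_neg_one hc] at h'
  exact (sq_eq_or_sq_eq_or_sq_eq_of_add_add_eq_of_inv_add_inv_add_inv_eq ht h h').imp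
    (sq_eq_sq_of_sq_eq_mul_sq ha ht)
    (.imp (sq_eq_sq_of_sq_eq_mul_sq hb ht) (sq_eq_sq_of_sq_eq_mul_sq hc ht))

end Signs

section NormOne

variable {F : Type*} [Field F] [CharP F 3]

theorem sq_eq_or_sq_eq_or_sq_eq_of_pow_eq_one {d : ℕ} {a b c x y z t : F}
    (ha : a = 0 ∨ a = 1 ∨ a = -1) (hb : b = 0 ∨ b = 1 ∨ b = -1) (hc : c = 0 ∨ c = 1 ∨ c = -1)
    (hx : x ^ (3 ^ d + 1) = 1) (hy : y ^ (3 ^ d + 1) = 1) (hz : z ^ (3 ^ d + 1) = 1)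
    (ht : t ^ (3 ^ d + 1) = 1) (h : a * x + b * y + c * z = t) :
    t ^ 2 = x ^ 2 ∨ t ^ 2 = y ^ 2 ∨ t ^ 2 = z ^ 2 := by
  set φ := iterateFrobenius F 3 d
  have hφ_inv {u : F} (hu : u ^ (3 ^ d + 1) = 1) : φ u = u⁻¹ :=
    eq_inv_of_mul_eq_one_left (by rwa [iterateFrobenius_def, ← pow_succ])
  have hφ_fix {a : F} (ha : a = 0 ∨ a = 1 ∨ a = -1) : φ a = a := by
    rcases ha with rfl | rfl | rfl <;> simp
  have h' := congrArg φ h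
  simp only [map_add, map_mul, hφ_fix ha, hφ_fix hb, hφ_fix hc, hφ_inv hx, hφ_inv hy, hφ_inv hz,
    hφ_inv ht] at h'
  have ht0 : t ≠ 0 := by rintro rfl; simp at ht
  exact sq_eq_or_sq_eq_or_sq_eq_of_mul_add_mul_add_mul_eq ha hb hc ht0 h h'

end NormOne

section Counting

variable {F : Type*} [Field F]

theorem two_mul_card_image_sq {s : Finset F} [DecidableEq F] (h2 : (2 : F) ≠ 0) (hs0 : 0 ∉ s)
    (hneg : ∀ x ∈ s, -x ∈ s) : 2 * (s.image (· ^ 2)).card = s.card := by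
  have hfiber : ∀ u ∈ s.image (· ^ 2), (s.filter (· ^ 2 = u)).card = 2 := by
    simp only [Finset.mem_image, forall_exists_index, and_imp]
    rintro _ y hy rfl
    have hy0 : y ≠ 0 := fun h ↦ hs0 (h ▸ hy)
    have hfilter : s.filter (· ^ 2 = y ^ 2) = {y, -y} := by
      ext x
      simp only [Finset.mem_filter, Finset.mem_insert, Finset.mem_singleton,
        sq_eq_sq_iff_eq_or_eq_neg]
      constructor
      · exact And.right
      · rintro (hx | hx) <;> simp [hx, hy, hneg y hy]
    rw [hfilter, Finset.card_pair]
    intro hyy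
    exact hy0 ((mul_eq_zero.mp (by linear_combination hyy : 2 * y = 0)).resolve_left h2)
  rw [Finset.card_eq_sum_card_image (· ^ 2) s, Finset.sum_congr rfl hfiber, Finset.sum_const,
    smul_eq_mul, mul_comm]

theorem card_nthRootsFinset_one_of_dvd [Finite F] {n : ℕ} (hn : n ∣ Nat.card Fˣ) :
    (nthRootsFinset n (1 : F)).card = n := by
  have : NeZero n := ⟨fun h ↦ Nat.card_pos.ne' (zero_dvd_iff.mp (h ▸ hn))⟩
  have hcard : Nat.card (rootsOfUnity n F) = n := by
    rw [rootsOfUnity_eq_ker, IsCyclic.card_powMonoidHom_ker, Nat.gcd_eq_right hn]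
  obtain ⟨ζ, hζ⟩ := card_rootsOfUnity_eq_iff_exists_isPrimitiveRoot.mp hcard
  exact hζ.card_nthRootsFinset

theorem two_mul_card_image_sq_nthRootsFinset_one [Finite F] [DecidableEq F] {n : ℕ}
    (h2 : (2 : F) ≠ 0) (hn : n ∣ Nat.card Fˣ) (hn_even : Even n) :
    2 * ((nthRootsFinset n (1 : F)).image (· ^ 2)).card = n := by
  have hn0 : n ≠ 0 := fun h ↦ Nat.card_pos.ne' (zero_dvd_iff.mp (h ▸ hn))
  rw [two_mul_card_image_sq h2, card_nthRootsFinset_one_of_dvd hn]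
  · simp [mem_nthRootsFinset (Nat.pos_of_ne_zero hn0), hn0]
  · simp [mem_nthRootsFinset (Nat.pos_of_ne_zero hn0), hn_even.neg_pow]

end Counting

theorem stmt7_general (d : ℕ) (F : Type) [Field F] [Fintype F] [DecidableEq F]
    (hcard : Fintype.card F = 3 ^ (2 * d)) :
    (Finset.univ.filter (fun u : F => ∃ x : F, x ^ (3 ^ d + 1) = 1 ∧ u = x ^ 2)).card
        = (3 ^ d + 1) / 2 ∧
    ∀ x y z t : F, x ^ (3 ^ d + 1) = 1 → y ^ (3 ^ d + 1) = 1 →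
      z ^ (3 ^ d + 1) = 1 → t ^ (3 ^ d + 1) = 1 →
      x ^ 2 ≠ y ^ 2 → x ^ 2 ≠ z ^ 2 → x ^ 2 ≠ t ^ 2 →
      y ^ 2 ≠ z ^ 2 → y ^ 2 ≠ t ^ 2 → z ^ 2 ≠ t ^ 2 →
      ¬ ∃ a b c : F, (a = 0 ∨ a = 1 ∨ a = -1) ∧ (b = 0 ∨ b = 1 ∨ b = -1) ∧
        (c = 0 ∨ c = 1 ∨ c = -1) ∧ a * x + b * y + c * z = t := by
  have : Fact (Nat.Prime 3) := ⟨Nat.prime_three⟩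
  have : CharP F 3 := charP_of_card_eq_prime_pow hcard
  constructor
  · have h2 : (2 : F) ≠ 0 := Ring.two_ne_zero (by rw [ringChar.eq F 3]; decide)
    have hdvd : 3 ^ d + 1 ∣ Nat.card Fˣ := by
      rw [Nat.card_units, Nat.card_eq_fintype_card, hcard, pow_mul', ← one_pow 2, Nat.sq_sub_sq]
      exact dvd_mul_right _ _
    have hfilter : Finset.univ.filter (fun u : F => ∃ x : F, x ^ (3 ^ d + 1) = 1 ∧ u = x ^ 2)
        = (nthRootsFinset (3 ^ d + 1) (1 : F)).image (· ^ 2) := by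
      ext u
      simp [mem_nthRootsFinset, eq_comm]
    have := two_mul_card_image_sq_nthRootsFinset_one h2 hdvd (Odd.pow (by decide)).add_one
    rw [hfilter]
    omega
  · rintro x y z t hx hy hz ht - - hxt - hyt hzt ⟨a, b, c, ha, hb, hc, h⟩
    rcases sq_eq_or_sq_eq_or_sq_eq_of_pow_eq_one ha hb hc hx hy hz ht h with h | h | h
    exacts [hxt h.symm, hyt h.symm, hzt h.symm]

/-- θ₀ = {x : x^{3^d+1} = 1} gives (3^d+1)/2 points of PG(2d−1,3) in the
cyclic model (x ~ y iff x² = y²), no four of which are coplanar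
(coplanarity of ⟨x⟩,⟨y⟩,⟨z⟩,⟨t⟩ means ax + by + cz = t for some a,b,c ∈ F_3). -/
theorem stmt7 (d : ℕ) (hd : 2 ≤ d) (F : Type) [Field F] [Fintype F] [DecidableEq F]
    (hcard : Fintype.card F = 3 ^ (2 * d)) :
    (Finset.univ.filter (fun u : F => ∃ x : F, x ^ (3 ^ d + 1) = 1 ∧ u = x ^ 2)).card
        = (3 ^ d + 1) / 2 ∧
    ∀ x y z t : F, x ^ (3 ^ d + 1) = 1 → y ^ (3 ^ d + 1) = 1 →
      z ^ (3 ^ d + 1) = 1 → t ^ (3 ^ d + 1) = 1 →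
      x ^ 2 ≠ y ^ 2 → x ^ 2 ≠ z ^ 2 → x ^ 2 ≠ t ^ 2 →
      y ^ 2 ≠ z ^ 2 → y ^ 2 ≠ t ^ 2 → z ^ 2 ≠ t ^ 2 →
      ¬ ∃ a b c : F, (a = 0 ∨ a = 1 ∨ a = -1) ∧ (b = 0 ∨ b = 1 ∨ b = -1) ∧
        (c = 0 ∨ c = 1 ∨ c = -1) ∧ a * x + b * y + c * z = t :=
  stmt7_general d F hcard
end

section
/- Let d ≥ 2. For every t ∈ F_{3^{2d}} \ {0} there exist x, y, z ∈ F_{3^{2d}} with x^{3^d+1} = y^{3^d+1} = z^{3^d+1} = 1 and x + y + z = t. -/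
/-! Let `q ^ 2 = #F` and write `N u = u ^ (q + 1)` for the norm to the subfield `{u | u ^ q = u}`
of order `q`. For `a ≠ 0` and `z` of norm one, `N (a + z) = N a + 1 + Tr (a ^ q * z)`, and
`w = a ^ q * z` has fixed norm `N a`; so a value of `N (a + z)` fixes the trace and norm of `w`,
hence `w` up to the two roots of a quadratic. The `q + 1` norm-one elements therefore give at
least `(q + 1) / 2` values of `N (t + z)` and as many of `N (1 + s)`, all in a set of size `q`:
some `N (t + z) = N (1 + s)` with `z`, `s` of norm one. Then `t + z` is the sum of the norm-one
elements `(t + z) s / (1 + s)` and `(t + z) / (1 + s)`, and `t = (t + z) + (-z)`. -/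

open Finset Polynomial

theorem card_le_two_of_forall_sq_sub_mul_add_eq_zero {R : Type*} [CommRing R] [IsDomain R]
    {T : Finset R} {A B : R} (hT : ∀ w ∈ T, w ^ 2 - A * w + B = 0) : #T ≤ 2 := by
  have hdeg : (X ^ 2 - C A * X + C B : R[X]).natDegree = 2 := by compute_degree!
  have hne : (X ^ 2 - C A * X + C B : R[X]) ≠ 0 := ne_zero_of_natDegree_gt (n := 0) (by omega)
  calc #T ≤ _ := card_le_degree_of_subset_roots fun w hw => (mem_roots hne).2 (by simp [hT w hw])
    _ = 2 := hdeg

theorem exists_add_eq_of_pow_eq_pow_one_add {K : Type*} [Field K] {n : ℕ} {w s : K}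
    (hs : s ^ n = 1) (hw : w ^ n = (1 + s) ^ n) (hs' : 1 + s ≠ 0) :
    ∃ x y : K, x ^ n = 1 ∧ y ^ n = 1 ∧ x + y = w := by
  have hpow : (1 + s) ^ n ≠ 0 := pow_ne_zero n hs'
  refine ⟨w * s / (1 + s), w / (1 + s), ?_, ?_, ?_⟩
  · rw [div_pow, mul_pow, hw, hs, mul_one, div_self hpow]
  · rw [div_pow, hw, div_self hpow]
  · field_simp
    ring

namespace FiniteField

variable {F : Type*} [Field F] [Fintype F]

theorem exists_isPrimitiveRoot_of_dvd_card_sub_one {n : ℕ} (hn : n ∣ Fintype.card F - 1) :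
    ∃ ζ : F, IsPrimitiveRoot ζ n := by
  obtain ⟨g, hg⟩ := IsCyclic.exists_ofOrder_eq_natCard (α := Fˣ)
  rw [Nat.card_units, Nat.card_eq_fintype_card] at hg
  obtain ⟨m, hm⟩ := hn
  refine ⟨((g ^ m : Fˣ) : F), IsPrimitiveRoot.coe_units_iff.2 ?_⟩
  exact (IsPrimitiveRoot.orderOf g).pow (by rw [hg]; exact Nat.sub_pos_of_lt Fintype.one_lt_card)
    (by rw [hg, hm, mul_comm])

theorem card_nthRootsFinset_one_of_dvd_card_sub_one {n : ℕ} (hn : n ∣ Fintype.card F - 1) :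
    #(nthRootsFinset n (1 : F)) = n :=
  (exists_isPrimitiveRoot_of_dvd_card_sub_one hn).choose_spec.card_nthRootsFinset

theorem card_filter_pow_eq_self_le [DecidableEq F] {q : ℕ} (hq : 1 < q) :
    #{u : F | u ^ q = u} ≤ q := by
  have hne : (X ^ q - X : F[X]) ≠ 0 := X_pow_card_sub_X_ne_zero F hq
  calc #{u : F | u ^ q = u} ≤ (X ^ q - X : F[X]).natDegree :=
        card_le_degree_of_subset_roots fun u hu => (mem_roots hne).2 (by
          simpa [sub_eq_zero] using (mem_filter_univ u).1 hu)
    _ = q := X_pow_card_sub_X_natDegree_eq F hq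

variable {q : ℕ}

theorem one_lt_of_card_eq_sq (hcard : Fintype.card F = q ^ 2) : 1 < q := by
  have := hcard ▸ (Fintype.one_lt_card (α := F))
  nlinarith

theorem add_pow_of_card_eq_sq (hcard : Fintype.card F = q ^ 2) (a b : F) :
    (a + b) ^ q = a ^ q + b ^ q := by
  obtain ⟨p, hchar, n, hp, hpn⟩ := FiniteField.card' F
  obtain ⟨i, -, rfl⟩ := (Nat.dvd_prime_pow hp).1 (hpn ▸ hcard ▸ dvd_pow_self q two_ne_zero)
  have : Fact p.Prime := ⟨hp⟩
  exact add_pow_char_pow a b p i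

theorem pow_pow_of_card_eq_sq (hcard : Fintype.card F = q ^ 2) (a : F) : (a ^ q) ^ q = a := by
  rw [← pow_mul, ← sq, ← hcard, pow_card]

theorem pow_succ_pow_of_card_eq_sq (hcard : Fintype.card F = q ^ 2) (a : F) :
    (a ^ (q + 1)) ^ q = a ^ (q + 1) := by
  rw [pow_succ, mul_pow, pow_pow_of_card_eq_sq hcard, mul_comm]

theorem neg_pow_succ_of_card_eq_sq (hcard : Fintype.card F = q ^ 2) (a : F) :
    (-a) ^ (q + 1) = a ^ (q + 1) := by
  have hneg : (-a) ^ q = -a ^ q := by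
    rw [eq_neg_iff_add_eq_zero, ← add_pow_of_card_eq_sq hcard, neg_add_cancel,
      zero_pow (one_lt_of_card_eq_sq hcard).ne_bot]
  rw [pow_succ, hneg, pow_succ, neg_mul_neg]

theorem add_pow_succ_of_card_eq_sq (hcard : Fintype.card F = q ^ 2) (a z : F) :
    (a + z) ^ (q + 1) = a ^ (q + 1) + z ^ (q + 1) + (a ^ q * z + (a ^ q * z) ^ q) := by
  rw [mul_pow, pow_pow_of_card_eq_sq hcard, pow_succ, add_pow_of_card_eq_sq hcard, pow_succ,
    pow_succ]
  ring

theorem card_filter_pow_succ_add_eq_le_two [DecidableEq F] (hcard : Fintype.card F = q ^ 2)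
    {a : F} (ha : a ≠ 0) (v : F) :
    #{z ∈ nthRootsFinset (q + 1) (1 : F) | (a + z) ^ (q + 1) = v} ≤ 2 := by
  set T := {z ∈ nthRootsFinset (q + 1) (1 : F) | (a + z) ^ (q + 1) = v}
  rw [← card_image_of_injective T (mul_right_injective₀ (pow_ne_zero q ha))]
  refine card_le_two_of_forall_sq_sub_mul_add_eq_zero (A := v - a ^ (q + 1) - 1)
    (B := a ^ (q + 1)) ?_
  simp only [mem_image, forall_exists_index, and_imp]
  rintro _ z hz rfl
  obtain ⟨hz1, hzv⟩ := mem_filter.1 hz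
  rw [mem_nthRootsFinset (Nat.add_one_pos q)] at hz1
  -- `w = a ^ q * z` has trace `v - a ^ (q + 1) - 1` and norm `a ^ (q + 1)`, so it is a root of
  -- `X ^ 2 - (v - a ^ (q + 1) - 1) * X + a ^ (q + 1)`
  have hnorm : (a ^ q * z) ^ q * (a ^ q * z) = a ^ (q + 1) := by
    rw [mul_pow, pow_pow_of_card_eq_sq hcard, ← mul_one (a ^ (q + 1)), ← hz1]
    ring
  have htrace := add_pow_succ_of_card_eq_sq hcard a z
  rw [hzv, hz1] at htrace
  linear_combination -(a ^ q * z) * htrace - hnorm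

theorem card_le_two_mul_card_image_pow_succ_add [DecidableEq F] (hcard : Fintype.card F = q ^ 2)
    {a : F} (ha : a ≠ 0) :
    q + 1 ≤ 2 * #((nthRootsFinset (q + 1) (1 : F)).image fun z ↦ (a + z) ^ (q + 1)) := by
  have hdvd : q + 1 ∣ Fintype.card F - 1 := by
    rw [hcard, ← one_pow 2, Nat.sq_sub_sq]
    exact dvd_mul_right _ _
  calc q + 1 = #(nthRootsFinset (q + 1) (1 : F)) :=
        (card_nthRootsFinset_one_of_dvd_card_sub_one hdvd).symm
    _ ≤ _ := card_le_mul_card_image _ 2 fun v _ ↦ card_filter_pow_succ_add_eq_le_two hcard ha v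

theorem exists_pow_succ_add_eq_pow_succ_add (hcard : Fintype.card F = q ^ 2) {a b : F}
    (ha : a ≠ 0) (hb : b ≠ 0) : ∃ z ∈ nthRootsFinset (q + 1) (1 : F),
      ∃ s ∈ nthRootsFinset (q + 1) (1 : F), (a + z) ^ (q + 1) = (b + s) ^ (q + 1) := by
  classical
  have hA := card_le_two_mul_card_image_pow_succ_add hcard ha
  have hB := card_le_two_mul_card_image_pow_succ_add hcard hb
  set A := (nthRootsFinset (q + 1) (1 : F)).image fun z ↦ (a + z) ^ (q + 1)
  set B := (nthRootsFinset (q + 1) (1 : F)).image fun z ↦ (b + z) ^ (q + 1)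
  have hAB : #(A ∪ B) ≤ q := by
    refine (card_le_card fun u hu ↦ ?_).trans
      (card_filter_pow_eq_self_le (one_lt_of_card_eq_sq hcard))
    obtain ⟨z, -, rfl⟩ | ⟨z, -, rfl⟩ := (mem_union.1 hu).imp mem_image.1 mem_image.1 <;>
      exact (mem_filter_univ _).2 (pow_succ_pow_of_card_eq_sq hcard _)
  obtain ⟨_, hv⟩ : (A ∩ B).Nonempty := by
    rw [← card_pos]
    have := card_union_add_card_inter A B
    omega
  obtain ⟨⟨z, hz, rfl⟩, ⟨s, hs, hzs⟩⟩ := (mem_inter.1 hv).imp mem_image.1 mem_image.1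
  exact ⟨z, hz, s, hs, hzs.symm⟩

theorem exists_add_add_eq_of_card_eq_sq (hcard : Fintype.card F = q ^ 2) {t : F} (ht : t ≠ 0) :
    ∃ x y z : F, x ^ (q + 1) = 1 ∧ y ^ (q + 1) = 1 ∧ z ^ (q + 1) = 1 ∧ x + y + z = t := by
  have hneg_one : (-1 : F) ^ (q + 1) = 1 := by rw [neg_pow_succ_of_card_eq_sq hcard, one_pow]
  by_cases htn : t ^ (q + 1) = 1
  · exact ⟨t, 1, -1, htn, one_pow _, hneg_one, by ring⟩
  obtain ⟨z, hz, s, hs, hzs⟩ := exists_pow_succ_add_eq_pow_succ_add hcard ht one_ne_zero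
  rw [mem_nthRootsFinset (Nat.add_one_pos q)] at hz hs
  have hs0 : 1 + s ≠ 0 := by
    intro h
    rw [h, zero_pow q.succ_ne_zero, pow_eq_zero_iff q.succ_ne_zero, add_eq_zero_iff_eq_neg] at hzs
    exact htn (by rw [hzs, neg_pow_succ_of_card_eq_sq hcard, hz])
  obtain ⟨x, y, hx, hy, hxy⟩ := exists_add_eq_of_pow_eq_pow_one_add hs hzs hs0
  exact ⟨x, y, -z, hx, hy, by rw [neg_pow_succ_of_card_eq_sq hcard, hz], by
    rw [hxy]; ring⟩

end FiniteField

theorem stmt8_general (d : ℕ) (F : Type) [Field F] [Fintype F]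
    (hcard : Fintype.card F = 3 ^ (2 * d)) :
    ∀ t : F, t ≠ 0 → ∃ x y z : F,
      x ^ (3 ^ d + 1) = 1 ∧ y ^ (3 ^ d + 1) = 1 ∧ z ^ (3 ^ d + 1) = 1 ∧
      x + y + z = t :=
  fun _ ht ↦ FiniteField.exists_add_add_eq_of_card_eq_sq (by rw [hcard, pow_mul']) ht

/-- every nonzero element of F_{3^{2d}} is a sum of three norm-one elements. -/
theorem stmt8 (d : ℕ) (hd : 2 ≤ d) (F : Type) [Field F] [Fintype F]
    (hcard : Fintype.card F = 3 ^ (2 * d)) :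
    ∀ t : F, t ≠ 0 → ∃ x y z : F,
      x ^ (3 ^ d + 1) = 1 ∧ y ^ (3 ^ d + 1) = 1 ∧ z ^ (3 ^ d + 1) = 1 ∧
      x + y + z = t :=
  stmt8_general d F hcard
end

section
/- Let d ≥ 1 and F = F_{4^{2d+1}} (characteristic 2). There are no a, b ∈ F_4 \ {0} and x ∈ F with x^{2^{2d+1}+1} = 1, x³ ≠ 1, (a+bx)³ ≠ 1, (a+bx)³ ≠ x³, such that (a + bx)^{2^{2d+1}+1} = 1. -/
/-! Write `q = 2 ^ (2d+1)`. Since `q ≡ 2 (mod 3)`, Frobenius `z ↦ z ^ q` squares the cube roots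
of unity, so for `y = a + b x` on the circle `x ^ (q+1) = 1` the condition `y ^ (q+1) = 1` reads
`(a² + b² / x)(a + b x) = 1`. Multiplying out gives `u x² + x + u² = 0` with `u = a² b`, a cube
root of unity; then `u x` is a root of `t² + t + 1`, so `x³ = (u x)³ = 1`. -/

theorem two_pow_odd_mod_three (n : ℕ) : 2 ^ (2 * n + 1) % 3 = 2 := by
  rw [pow_succ, pow_mul, Nat.mul_mod, Nat.pow_mod]
  norm_num

theorem pow_two_pow_odd_of_pow_three_eq_one {M : Type*} [Monoid M] {c : M} (hc : c ^ 3 = 1)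
    (n : ℕ) : c ^ 2 ^ (2 * n + 1) = c ^ 2 := by
  rw [pow_eq_pow_mod _ hc, two_pow_odd_mod_three]

section CommRing

variable {R : Type*} [CommRing R]

theorem pow_three_eq_one_of_mul_sq_add_add_sq_eq_zero {u x : R} (hu : u ^ 3 = 1)
    (h : u * x ^ 2 + x + u ^ 2 = 0) : x ^ 3 = 1 := by
  have hux : (u * x) ^ 2 + u * x + 1 = 0 := by linear_combination u * h - hu
  calc x ^ 3 = u ^ 3 * x ^ 3 := by rw [hu, one_mul]
    _ = 1 := by linear_combination (u * x - 1) * hux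

theorem pow_three_eq_one_of_conj_mul_eq_one {a b x X : R} (ha : a ^ 3 = 1) (hb : b ^ 3 = 1)
    (hX : X * x = 1) (h : (a ^ 2 + b ^ 2 * X) * (a + b * x) = 1) : x ^ 3 = 1 := by
  refine pow_three_eq_one_of_mul_sq_add_add_sq_eq_zero (u := a ^ 2 * b)
    (by linear_combination a ^ 6 * hb + (a ^ 3 + 1) * ha) ?_
  linear_combination x * h - (a * b ^ 2 + b ^ 3 * x) * hX - x * ha - x * hb + a * b ^ 2 * ha

theorem add_mul_pow_two_pow_odd [CharP R 2] {a b : R} (ha : a ^ 3 = 1) (hb : b ^ 3 = 1)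
    (x : R) (n : ℕ) :
    (a + b * x) ^ 2 ^ (2 * n + 1) = a ^ 2 + b ^ 2 * x ^ 2 ^ (2 * n + 1) := by
  rw [add_pow_char_pow, mul_pow, pow_two_pow_odd_of_pow_three_eq_one ha,
    pow_two_pow_odd_of_pow_three_eq_one hb]

end CommRing

theorem stmt9_general (d : ℕ) (F : Type) [Field F] [Fintype F]
    (hcard : Fintype.card F = 4 ^ (2 * d + 1)) :
    ¬ ∃ a b x : F, a ^ 3 = 1 ∧ b ^ 3 = 1 ∧
      x ^ (2 ^ (2 * d + 1) + 1) = 1 ∧ x ^ 3 ≠ 1 ∧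
      (a + b * x) ^ 3 ≠ 1 ∧ (a + b * x) ^ 3 ≠ x ^ 3 ∧
      (a + b * x) ^ (2 ^ (2 * d + 1) + 1) = 1 := by
  rintro ⟨a, b, x, ha, hb, hx, hx3, -, -, hy⟩
  have : CharP F 2 := charP_of_card_eq_prime_pow (f := 2 * (2 * d + 1)) <| by
    rw [hcard, pow_mul]
    norm_num
  rw [pow_succ] at hx hy
  rw [add_mul_pow_two_pow_odd ha hb] at hy
  exact hx3 (pow_three_eq_one_of_conj_mul_eq_one ha hb hx hy)

/-- no three collinear points on θ₀ in the cyclic model of PG(2d,4).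
Elements a with a³ = 1 are exactly the nonzero elements of the subfield F_4. -/
theorem stmt9 (d : ℕ) (hd : 1 ≤ d) (F : Type) [Field F] [Fintype F]
    (hcard : Fintype.card F = 4 ^ (2 * d + 1)) :
    ¬ ∃ a b x : F, a ^ 3 = 1 ∧ b ^ 3 = 1 ∧
      x ^ (2 ^ (2 * d + 1) + 1) = 1 ∧ x ^ 3 ≠ 1 ∧
      (a + b * x) ^ 3 ≠ 1 ∧ (a + b * x) ^ 3 ≠ x ^ 3 ∧
      (a + b * x) ^ (2 ^ (2 * d + 1) + 1) = 1 :=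
  stmt9_general d F hcard
end

section
/- Let d ≥ 1 and F = F_{4^{2d+1}}. There are no a, b, c ∈ F_4 \ {0} and x, y ∈ F with x^{2^{2d+1}+1} = y^{2^{2d+1}+1} = 1, x³ ≠ 1, y³ ≠ 1, x³ ≠ y³, such that z = a + bx + cy satisfies z^{2^{2d+1}+1} = 1, z³ ≠ 1, z³ ≠ x³, z³ ≠ y³. -/
/-!
Put `q = 2 ^ (2d+1)`, so that `q ≡ 2 (mod 3)` and `F_4ˣ` lies in the unitary group
`U = {u | u ^ (q+1) = 1}`. With `u = a`, `v = b x`, `w = c y ∈ U` and `z = u + v + w ∈ U`, the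
Frobenius `t ↦ t ^ q` is additive and inverts elements of `U`, so `z⁻¹ = u⁻¹ + v⁻¹ + w⁻¹`.
By the identity `(u + v + w)(uv + vw + wu) - uvw = (u + v)(v + w)(w + u)` this forces `z` to be
one of `u, v, w`, whose cubes are `1, x³, y³`.
-/

theorem add_add_eq_or_of_mul_inv_add_inv_add_inv_eq_one {K : Type*} [Field K] {u v w : K}
    (hu : u ≠ 0) (hv : v ≠ 0) (hw : w ≠ 0) (h : (u + v + w) * (u⁻¹ + v⁻¹ + w⁻¹) = 1) :
    u + v + w = u ∨ u + v + w = v ∨ u + v + w = w := by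
  have hprod : (v + w) * (w + u) * (u + v) = 0 := by
    field_simp at h
    linear_combination h
  rcases mul_eq_zero.mp hprod with hprod | huv
  · rcases mul_eq_zero.mp hprod with hvw | hwu
    · exact .inl (by linear_combination hvw)
    · exact .inr (.inl (by linear_combination hwu))
  · exact .inr (.inr (by linear_combination huv))

theorem pow_add_one_eq_one_of_pow_three_eq_one {M : Type*} [Monoid M] {e : M} (he : e ^ 3 = 1)
    {n : ℕ} (hn : Odd n) : e ^ (2 ^ n + 1) = 1 := by
  obtain ⟨k, hk⟩ : 3 ∣ 2 ^ n + 1 := by simpa using hn.nat_add_dvd_pow_add_pow 2 1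
  rw [hk, pow_mul, he, one_pow]

theorem pow_eq_inv_of_pow_succ_eq_one {M : Type*} [DivisionMonoid M] {u : M} {n : ℕ}
    (hu : u ^ (n + 1) = 1) : u ^ n = u⁻¹ :=
  eq_inv_of_mul_eq_one_left (by rwa [← pow_succ])

theorem mul_inv_add_inv_add_inv_eq_one_of_pow_expChar_pow_add_one_eq_one {K : Type*} [Field K]
    {p n : ℕ} [ExpChar K p] {u v w : K} (hu : u ^ (p ^ n + 1) = 1) (hv : v ^ (p ^ n + 1) = 1)
    (hw : w ^ (p ^ n + 1) = 1) (hz : (u + v + w) ^ (p ^ n + 1) = 1) :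
    (u + v + w) * (u⁻¹ + v⁻¹ + w⁻¹) = 1 := by
  rw [← pow_eq_inv_of_pow_succ_eq_one hu, ← pow_eq_inv_of_pow_succ_eq_one hv,
    ← pow_eq_inv_of_pow_succ_eq_one hw, ← add_pow_expChar_pow, ← add_pow_expChar_pow,
    ← pow_succ', hz]

theorem stmt10_general (d : ℕ) (F : Type) [Field F] [Fintype F]
    (hcard : Fintype.card F = 4 ^ (2 * d + 1)) :
    ¬ ∃ a b c x y : F, a ^ 3 = 1 ∧ b ^ 3 = 1 ∧ c ^ 3 = 1 ∧
      x ^ (2 ^ (2 * d + 1) + 1) = 1 ∧ y ^ (2 ^ (2 * d + 1) + 1) = 1 ∧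
      x ^ 3 ≠ 1 ∧ y ^ 3 ≠ 1 ∧ x ^ 3 ≠ y ^ 3 ∧
      (a + b * x + c * y) ^ (2 ^ (2 * d + 1) + 1) = 1 ∧
      (a + b * x + c * y) ^ 3 ≠ 1 ∧
      (a + b * x + c * y) ^ 3 ≠ x ^ 3 ∧
      (a + b * x + c * y) ^ 3 ≠ y ^ 3 := by
  rintro ⟨a, b, c, x, y, ha, hb, hc, hx, hy, -, -, -, hz, hz1, hzx, hzy⟩
  have : CharP F 2 := ringChar.of_eq <| FiniteField.even_card_iff_char_two.mpr <| by
    rw [hcard, Nat.pow_mod]; simp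
  have hodd : Odd (2 * d + 1) := odd_two_mul_add_one d
  have hu := pow_add_one_eq_one_of_pow_three_eq_one ha hodd
  have hv : (b * x) ^ (2 ^ (2 * d + 1) + 1) = 1 := by
    rw [mul_pow, pow_add_one_eq_one_of_pow_three_eq_one hb hodd, hx, one_mul]
  have hw : (c * y) ^ (2 ^ (2 * d + 1) + 1) = 1 := by
    rw [mul_pow, pow_add_one_eq_one_of_pow_three_eq_one hc hodd, hy, one_mul]
  have hne {t : F} (ht : t ^ (2 ^ (2 * d + 1) + 1) = 1) : t ≠ 0 :=
    (IsUnit.of_pow_eq_one ht (Nat.succ_ne_zero _)).ne_zero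
  have hsum := mul_inv_add_inv_add_inv_eq_one_of_pow_expChar_pow_add_one_eq_one hu hv hw hz
  rcases add_add_eq_or_of_mul_inv_add_inv_add_inv_eq_one (hne hu) (hne hv) (hne hw) hsum
    with h | h | h
  · exact hz1 (by rw [h, ha])
  · exact hzx (by rw [h, mul_pow, hb, one_mul])
  · exact hzy (by rw [h, mul_pow, hc, one_mul])

/-- no four coplanar points on θ₀ in the cyclic model of PG(2d,4). -/
theorem stmt10 (d : ℕ) (hd : 1 ≤ d) (F : Type) [Field F] [Fintype F]
    (hcard : Fintype.card F = 4 ^ (2 * d + 1)) :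
    ¬ ∃ a b c x y : F, a ^ 3 = 1 ∧ b ^ 3 = 1 ∧ c ^ 3 = 1 ∧
      x ^ (2 ^ (2 * d + 1) + 1) = 1 ∧ y ^ (2 ^ (2 * d + 1) + 1) = 1 ∧
      x ^ 3 ≠ 1 ∧ y ^ 3 ≠ 1 ∧ x ^ 3 ≠ y ^ 3 ∧
      (a + b * x + c * y) ^ (2 ^ (2 * d + 1) + 1) = 1 ∧
      (a + b * x + c * y) ^ 3 ≠ 1 ∧
      (a + b * x + c * y) ^ 3 ≠ x ^ 3 ∧
      (a + b * x + c * y) ^ 3 ≠ y ^ 3 :=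
  stmt10_general d F hcard
end

section
/- Let q = 4^d with d ≥ 2 and let F = F_{4^d}. Suppose x, y ∈ F \ {0} with x³ ≠ 1, y³ ≠ 1, x³ ≠ y³, and λ, μ ∈ F_4 \ {0} satisfy λ + μx = y and λ + μx^{−2} = y^{−2}. Then a contradiction follows; i.e., no such x, y, λ, μ exist. -/
/-!
In characteristic 2 with `l³ = m³ = 1`, the cleared second equation
`l x² y² + m y² + x²` is the square `(l² x y + m² y + x)²`, so `l² x y + m² y + x = 0`.
Substituting `y = l + m x` turns this into `l² m x + l m² x² = 1`, and then expanding
`y³ = (l + m x)³` gives `y³ = x³`.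
-/

theorem charP_two_of_card_eq_four_pow {F : Type*} [Field F] [Fintype F] {d : ℕ}
    (hcard : Fintype.card F = 4 ^ d) : CharP F 2 := by
  have h : (2 : F) ^ (2 * d) = 0 := by
    rw [pow_mul]
    exact_mod_cast hcard ▸ FiniteField.cast_card_eq_zero F
  exact CharTwo.of_one_ne_zero_of_two_eq_zero one_ne_zero (eq_zero_of_pow_eq_zero h)

section CharTwo

variable {R : Type*} [CommRing R] [CharP R 2] {l m x : R}

theorem add_mul_pow_three_eq_pow_three (hl : l ^ 3 = 1) (hm : m ^ 3 = 1)
    (h : l ^ 2 * x * (l + m * x) + m ^ 2 * (l + m * x) + x = 0) :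
    (l + m * x) ^ 3 = x ^ 3 := by
  have htwo := CharTwo.two_eq_zero (R := R)
  have hquad : x + l ^ 2 * m * x ^ 2 + l * m ^ 2 = 0 := by
    linear_combination h - x * hl - x * hm - x * htwo
  have hsum : l ^ 2 * m * x + l * m ^ 2 * x ^ 2 = 1 := by
    linear_combination l ^ 2 * m * hquad - l * m ^ 2 * x ^ 2 * hl - m ^ 3 * hl - hm - htwo
  linear_combination x ^ 3 * hm + hl + 3 * hsum + 2 * htwo

end CharTwo

theorem linear_relation_of_add_mul_inv_sq_eq {F : Type*} [Field F] [CharP F 2] {l m x y : F}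
    (hx : x ≠ 0) (hy : y ≠ 0) (hl : l ^ 3 = 1) (hm : m ^ 3 = 1)
    (h : l + m * x⁻¹ ^ 2 = y⁻¹ ^ 2) : l ^ 2 * x * y + m ^ 2 * y + x = 0 := by
  have htwo := CharTwo.two_eq_zero (R := F)
  have hcleared : l * (x * y) ^ 2 + m * y ^ 2 = x ^ 2 := by
    field_simp at h
    linear_combination h
  -- squaring is additive and sends `l²` to `l`, `m²` to `m`
  refine eq_zero_of_pow_eq_zero (n := 2) ?_
  linear_combination hcleared + l * (x * y) ^ 2 * hl + m * y ^ 2 * hm +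
      (l ^ 2 * m ^ 2 * x * y ^ 2 + l ^ 2 * x ^ 2 * y + m ^ 2 * x * y + x ^ 2) * htwo

theorem stmt12_general (d : ℕ) (F : Type) [Field F] [Fintype F]
    (hcard : Fintype.card F = 4 ^ d) :
    ¬ ∃ x y l m : F, x ≠ 0 ∧ y ≠ 0 ∧ x ^ 3 ≠ 1 ∧ y ^ 3 ≠ 1 ∧ x ^ 3 ≠ y ^ 3 ∧
      l ^ 3 = 1 ∧ m ^ 3 = 1 ∧
      l + m * x = y ∧ l + m * x⁻¹ ^ 2 = y⁻¹ ^ 2 := by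
  rintro ⟨x, y, l, m, hx, hy, -, -, hxy, hl, hm, rfl, h⟩
  have := charP_two_of_card_eq_four_pow hcard
  exact hxy (add_mul_pow_three_eq_pow_three hl hm
    (linear_relation_of_add_mul_inv_sq_eq hx hy hl hm h)).symm

/-- collinearity exclusion for V₁ = {P(x, x⁻²)} in PG(2d−1,4).
λ, μ range over F_4 \ {0}, i.e. the cube roots of unity of F = F_{4^d}. -/
theorem stmt12 (d : ℕ) (hd : 2 ≤ d) (F : Type) [Field F] [Fintype F]
    (hcard : Fintype.card F = 4 ^ d) :
    ¬ ∃ x y l m : F, x ≠ 0 ∧ y ≠ 0 ∧ x ^ 3 ≠ 1 ∧ y ^ 3 ≠ 1 ∧ x ^ 3 ≠ y ^ 3 ∧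
      l ^ 3 = 1 ∧ m ^ 3 = 1 ∧
      l + m * x = y ∧ l + m * x⁻¹ ^ 2 = y⁻¹ ^ 2 :=
  stmt12_general d F hcard
end

section
/- Let F = F_{4^d}, d ≥ 2. There do not exist x, y, z ∈ F \ {0} with x³, y³, z³ all distinct and all ≠ 1, and λ, μ, η ∈ F_4 \ {0} such that λ + μx + ηy = z and λ + μx^{−2} + ηy^{−2} = z^{−2}. -/
/-! Over `F` of characteristic 2 every cube root of unity `a` satisfies `a = (a²)²`, so the second
relation is the Frobenius image of `l² + m²/x + e²/y = 1/z`. Clearing denominators and substituting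
`z = l + m x + e y`, this becomes `(e²x + m²y)(l²mx + 1)(ey + l) = 0`. Each factor has the shape
`u a + v b` with `u³ = v³ = 1`, so its vanishing forces `x³ = y³`, `x³ = 1` or `y³ = 1`. -/

theorem sq_sq_eq_self_of_pow_three_eq_one {M : Type*} [Monoid M] {a : M} (ha : a ^ 3 = 1) :
    (a ^ 2) ^ 2 = a := by
  rw [← pow_mul, show 2 * 2 = 3 + 1 by rfl, pow_succ, ha, one_mul]

theorem pow_three_eq_of_mul_eq_mul {M : Type*} [CommMonoid M] {u v a b : M}
    (hu : u ^ 3 = 1) (hv : v ^ 3 = 1) (h : u * a = v * b) : a ^ 3 = b ^ 3 :=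
  calc a ^ 3 = (u * a) ^ 3 := by rw [mul_pow, hu, one_mul]
    _ = (v * b) ^ 3 := by rw [h]
    _ = b ^ 3 := by rw [mul_pow, hv, one_mul]

theorem pow_three_eq_one_of_mul_eq {M : Type*} [CommMonoid M] {u v a : M}
    (hu : u ^ 3 = 1) (hv : v ^ 3 = 1) (h : u * a = v) : a ^ 3 = 1 := by
  simpa using pow_three_eq_of_mul_eq_mul hu hv (b := 1) (by rwa [mul_one])

theorem mul_mul_eq_zero_of_cleared_eq {R : Type*} [CommRing R] {l m e x y z : R}
    (hl : l ^ 3 = 1) (hm : m ^ 3 = 1) (he : e ^ 3 = 1) (hz : l + m * x + e * y = z)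
    (h : l ^ 2 * (x * y * z) + m ^ 2 * (y * z) + e ^ 2 * (x * z) = x * y) :
    (e ^ 2 * x + m ^ 2 * y) * (l ^ 2 * m * x + 1) * (e * y + l) = 0 := by
  linear_combination h + (l ^ 2 * x * y + m ^ 2 * y + e ^ 2 * x) * hz
    + (-(x * y) + x * y * m ^ 3 + x ^ 2 * m * e ^ 2) * hl
    + (x * y ^ 2 * l ^ 2 * e) * hm + (x ^ 2 * y * l ^ 2 * m) * he

theorem CharTwo.eq_of_add_mul_sq_add_mul_sq_eq_sq {R : Type*} [CommRing R] [CharP R 2]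
    [NoZeroDivisors R] {l m e a b c : R} (hl : l ^ 3 = 1) (hm : m ^ 3 = 1) (he : e ^ 3 = 1)
    (h : l + m * a ^ 2 + e * b ^ 2 = c ^ 2) : l ^ 2 + m ^ 2 * a + e ^ 2 * b = c := by
  refine CharTwo.sq_injective ?_
  simpa only [CharTwo.add_sq, mul_pow, sq_sq_eq_self_of_pow_three_eq_one hl,
    sq_sq_eq_self_of_pow_three_eq_one hm, sq_sq_eq_self_of_pow_three_eq_one he] using h

theorem stmt13_general (d : ℕ) (F : Type) [Field F] [Fintype F]
    (hcard : Fintype.card F = 4 ^ d) :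
    ¬ ∃ x y z l m e : F, x ≠ 0 ∧ y ≠ 0 ∧ z ≠ 0 ∧
      x ^ 3 ≠ 1 ∧ y ^ 3 ≠ 1 ∧ z ^ 3 ≠ 1 ∧
      x ^ 3 ≠ y ^ 3 ∧ x ^ 3 ≠ z ^ 3 ∧ y ^ 3 ≠ z ^ 3 ∧
      l ^ 3 = 1 ∧ m ^ 3 = 1 ∧ e ^ 3 = 1 ∧
      l + m * x + e * y = z ∧ l + m * x⁻¹ ^ 2 + e * y⁻¹ ^ 2 = z⁻¹ ^ 2 := by
  rintro ⟨x, y, z, l, m, e, hx, hy, hz, hx3, hy3, -, hxy, -, -, hl, hm, he, hsum, hinv⟩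
  have : CharP F 2 := charP_of_card_eq_prime_pow (f := 2 * d) (by rw [hcard, pow_mul]; rfl)
  have hlin := CharTwo.eq_of_add_mul_sq_add_mul_sq_eq_sq hl hm he hinv
  have hcleared : l ^ 2 * (x * y * z) + m ^ 2 * (y * z) + e ^ 2 * (x * z) = x * y := by
    field_simp at hlin
    linear_combination hlin
  have sq_cube : ∀ a : F, a ^ 3 = 1 → (a ^ 2) ^ 3 = 1 := fun a ha ↦ by
    rw [pow_right_comm, ha, one_pow]
  rcases mul_eq_zero.mp (mul_mul_eq_zero_of_cleared_eq hl hm he hsum hcleared) with h | hey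
  rcases mul_eq_zero.mp h with hexmy | hlmx
  · exact hxy <| pow_three_eq_of_mul_eq_mul (sq_cube e he) (sq_cube m hm)
      (CharTwo.add_eq_zero.mp hexmy)
  · exact hx3 <| pow_three_eq_one_of_mul_eq (by rw [mul_pow, sq_cube l hl, hm, one_mul])
      (one_pow 3) (CharTwo.add_eq_zero.mp hlmx)
  · exact hy3 <| pow_three_eq_one_of_mul_eq he hl (CharTwo.add_eq_zero.mp hey)

/-- coplanarity exclusion for the 4-general set V₁ of PG(2d−1,4). -/
theorem stmt13 (d : ℕ) (hd : 2 ≤ d) (F : Type) [Field F] [Fintype F]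
    (hcard : Fintype.card F = 4 ^ d) :
    ¬ ∃ x y z l m e : F, x ≠ 0 ∧ y ≠ 0 ∧ z ≠ 0 ∧
      x ^ 3 ≠ 1 ∧ y ^ 3 ≠ 1 ∧ z ^ 3 ≠ 1 ∧
      x ^ 3 ≠ y ^ 3 ∧ x ^ 3 ≠ z ^ 3 ∧ y ^ 3 ≠ z ^ 3 ∧
      l ^ 3 = 1 ∧ m ^ 3 = 1 ∧ e ^ 3 = 1 ∧
      l + m * x + e * y = z ∧ l + m * x⁻¹ ^ 2 + e * y⁻¹ ^ 2 = z⁻¹ ^ 2 :=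
  stmt13_general d F hcard
end

section
/- Let q be a prime power with q ≡ 1 (mod 3) and let ξ ∈ F_q satisfy ξ² + ξ + 1 = 0. Let t₁, t₂, t₃ ∈ F_{q²} with t_i^{q+1} = 1 and t₁ ≠ 1. Then the 4×6 matrix over F_{q²} with rows (1,1,1,1,0,0), (1,t₁³,t₁,t₁²,0,0), (1,t₂³,ξt₂,ξt₂²,t₂,t₂²), (1,t₃³,ξ²t₃,ξ²t₃²,−t₃,−t₃²) has rank 4. -/
/-! If a combination of the rows vanishes, the last two columns kill the coefficients of the
last two rows unless t₂ = t₃ =: t; in that case ξ + ξ² = -1 reduces the remaining columns to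
t₁(t + 2) = t(t - 1). Conjugating by the Frobenius x ↦ x^q, which inverts elements of norm one,
gives t(1 + 2t) = t₁(1 - t), and the two relations combine to 3t(t² + t + 1) = 0. Then t³ = 1
and t^(q+1) = 1 with gcd(3, q + 1) = 1, so t = 1 and 3 = 0, contradicting q ≡ 1 (mod 3). -/

section Field

variable {K : Type*} [Field K]

theorem sq_add_add_one_eq_zero_of_mul_add_two_eq (σ : K →+* K) {t u : K} (ht : σ t * t = 1)
    (hu : σ u * u = 1) (h3 : (3 : K) ≠ 0) (h : u * (t + 2) = t * (t - 1)) :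
    t ^ 2 + t + 1 = 0 := by
  have hσ : σ u * (σ t + 2) = σ t * (σ t - 1) := by simpa [map_ofNat] using congrArg σ h
  -- multiply by u t² and use σ u * u = σ t * t = 1
  have h' : t * (1 + 2 * t) = u * (1 - t) := by
    linear_combination (u * t ^ 2) * hσ - (t * u * σ u - u * t * σ t - u + u * t) * ht
      - (t + 2 * t ^ 2) * hu
  have h0 : 3 * t * (t ^ 2 + t + 1) = 0 := by linear_combination (1 - t) * h + (t + 2) * h'
  simpa [h3, right_ne_zero_of_mul_eq_one ht] using h0

theorem mul_add_two_ne_mul_sub_one {p k : ℕ} [ExpChar K p] (h3 : (3 : K) ≠ 0)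
    (hmod : p ^ k % 3 = 1) {t u : K} (ht : t ^ (p ^ k + 1) = 1) (hu : u ^ (p ^ k + 1) = 1) :
    u * (t + 2) ≠ t * (t - 1) := by
  intro h
  have hnorm : ∀ x : K, x ^ (p ^ k + 1) = 1 → iterateFrobenius K p k x * x = 1 := fun x hx ↦ by
    rw [iterateFrobenius_def, ← pow_succ, hx]
  have hcyc := sq_add_add_one_eq_zero_of_mul_add_two_eq _ (hnorm t ht) (hnorm u hu) h3 h
  have ht1 : t = 1 := by
    have hgcd : Nat.gcd 3 (p ^ k + 1) = 1 := by
      rw [Nat.gcd_rec, show (p ^ k + 1) % 3 = 2 by omega]; rfl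
    simpa [hgcd] using pow_gcd_eq_one.mpr ⟨(by linear_combination (t - 1) * hcyc : t ^ 3 = 1), ht⟩
  subst ht1
  exact h3 (by linear_combination hcyc)

theorem rank_twistedCubicPoints_eq_four {ξ t₁ t₂ t₃ : K} (hξ : ξ ^ 2 + ξ + 1 = 0)
    (ht₁ : t₁ ≠ 1) (ht₂ : t₂ ≠ 0) (ht₃ : t₃ ≠ 0) (h : t₂ = t₃ → t₁ * (t₃ + 2) ≠ t₃ * (t₃ - 1)) :
    Matrix.rank
      !![1, 1, 1, 1, 0, 0;
         1, t₁ ^ 3, t₁, t₁ ^ 2, 0, 0;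
         1, t₂ ^ 3, ξ * t₂, ξ * t₂ ^ 2, t₂, t₂ ^ 2;
         1, t₃ ^ 3, ξ ^ 2 * t₃, ξ ^ 2 * t₃ ^ 2, -t₃, -t₃ ^ 2] = 4 := by
  refine (LinearIndependent.rank_matrix ?_).trans (Fintype.card_fin 4)
  rw [Fintype.linearIndependent_iff]
  intro g hg
  have e0 := congr_fun hg 0
  have e2 := congr_fun hg 2
  have e3 := congr_fun hg 3
  have e4 := congr_fun hg 4
  have e5 := congr_fun hg 5
  simp only [Matrix.of_row, Fin.isValue, Finset.sum_apply, Pi.smul_apply, Matrix.cons_val',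
    Matrix.cons_val_zero, Matrix.cons_val_fin_one, smul_eq_mul, Fin.sum_univ_four, mul_one,
    Matrix.cons_val_one, Matrix.cons_val, Pi.zero_apply, mul_zero, add_zero, zero_add,
    mul_neg] at e0 e2 e3 e4 e5
  have hg₃ : g 3 = 0 := by
    have : g 3 * t₃ * (t₃ - t₂) = 0 := by linear_combination t₂ * e4 - e5
    rcases mul_eq_zero.mp this with h0 | h0
    · exact (mul_eq_zero.mp h0).resolve_right ht₃
    obtain rfl : t₂ = t₃ := (sub_eq_zero.mp h0).symm
    have hg₂ : g 2 = g 3 := by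
      have : (g 2 - g 3) * t₂ = 0 := by linear_combination e4
      exact sub_eq_zero.mp ((mul_eq_zero.mp this).resolve_right ht₂)
    rw [hg₂] at e0 e2 e3
    have : g 3 * (t₁ * (t₂ + 2) - t₂ * (t₂ - 1)) = 0 := by
      linear_combination (e3 - e2 - g 3 * (t₂ ^ 2 - t₂) * hξ) - t₁ * (e2 - e0 - g 3 * t₂ * hξ)
    exact (mul_eq_zero.mp this).resolve_right (sub_ne_zero.mpr (h rfl))
  have hg₂ : g 2 = 0 := by
    have : g 2 * t₂ = 0 := by linear_combination e4 + t₃ * hg₃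
    exact (mul_eq_zero.mp this).resolve_right ht₂
  have hg₁ : g 1 = 0 := by
    have : g 1 * (t₁ - 1) = 0 := by
      linear_combination e2 - e0 + (1 - ξ * t₂) * hg₂ + (1 - ξ ^ 2 * t₃) * hg₃
    exact (mul_eq_zero.mp this).resolve_right (sub_ne_zero.mpr ht₁)
  have hg₀ : g 0 = 0 := by linear_combination e0 - hg₁ - hg₂ - hg₃
  intro i
  fin_cases i <;> assumption

end Field

/-- rank-4 condition showing the union of three twisted cubics is a
4-general set of PG(5,q), q ≡ 1 (mod 3). K plays the role of F_{q²}; ξ is a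
primitive cube root of unity (lying in the subfield F_q). -/
theorem stmt15 (q : ℕ) (hq : ∃ p k : ℕ, p.Prime ∧ 0 < k ∧ q = p ^ k)
    (hmod : q % 3 = 1) (K : Type) [Field K] [Fintype K]
    (hcard : Fintype.card K = q ^ 2)
    (ξ : K) (hξ : ξ ^ 2 + ξ + 1 = 0)
    (t₁ t₂ t₃ : K) (h1 : t₁ ^ (q + 1) = 1) (h2 : t₂ ^ (q + 1) = 1)
    (h3 : t₃ ^ (q + 1) = 1) (ht1 : t₁ ≠ 1) :
    Matrix.rank
      !![1, 1, 1, 1, 0, 0;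
         1, t₁ ^ 3, t₁, t₁ ^ 2, 0, 0;
         1, t₂ ^ 3, ξ * t₂, ξ * t₂ ^ 2, t₂, t₂ ^ 2;
         1, t₃ ^ 3, ξ ^ 2 * t₃, ξ ^ 2 * t₃ ^ 2, -t₃, -t₃ ^ 2] = 4 := by
  obtain ⟨p, k, hp, hk, rfl⟩ := hq
  have : Fact p.Prime := ⟨hp⟩
  have : CharP K p := charP_of_card_eq_prime_pow (f := k * 2) (by rw [hcard, pow_mul])
  have hthree : (3 : K) ≠ 0 := by
    intro h0
    have hp3 : p = 3 := (Nat.prime_dvd_prime_iff_eq hp Nat.prime_three).mp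
      ((CharP.cast_eq_zero_iff K p 3).mp (by exact_mod_cast h0))
    simp [hp3, Nat.pow_mod, hk.ne'] at hmod
  refine rank_twistedCubicPoints_eq_four hξ ht1 (fun h0 ↦ by simp [h0] at h2)
    (fun h0 ↦ by simp [h0] at h3) ?_
  rintro rfl
  exact mul_add_two_ne_mul_sub_one hthree hmod h3 h1
end

section
/- Let q = p^r be a prime power. In PG(7,q), realized as PG(V) for V = {(x,y,z,t) : x,t ∈ F_q, y,z ∈ F_{q³}} ≅ F_q^8, the set O = {(1, x, x^{q²+q}, x^{q²+q+1}) : x ∈ F_{q³}} ∪ {(0,0,0,1)} has size q³+1 and no plane of PG(V) meets O in more than three points. -/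
section Aux

variable {K : Type} [Field K]

lemma key4 (a₁ a₂ a₃ a₄ y₁ y₂ y₃ y₄ z₁ z₂ z₃ z₄ w₁ w₂ w₃ w₄ : K)
    (hy12 : y₁ ≠ y₂) (hy13 : y₁ ≠ y₃) (hy14 : y₁ ≠ y₄)
    (hz13 : z₁ ≠ z₃) (hz23 : z₂ ≠ z₃) (hz24 : z₂ ≠ z₄)
    (hw14 : w₁ ≠ w₄) (hw24 : w₂ ≠ w₄) (hw34 : w₃ ≠ w₄)
    (e1 : a₁ + a₂ + a₃ + a₄ = 0)
    (ey : a₁*y₁ + a₂*y₂ + a₃*y₃ + a₄*y₄ = 0)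
    (ez : a₁*z₁ + a₂*z₂ + a₃*z₃ + a₄*z₄ = 0)
    (ew : a₁*w₁ + a₂*w₂ + a₃*w₃ + a₄*w₄ = 0)
    (eyz : a₁*(y₁*z₁) + a₂*(y₂*z₂) + a₃*(y₃*z₃) + a₄*(y₄*z₄) = 0)
    (eyw : a₁*(y₁*w₁) + a₂*(y₂*w₂) + a₃*(y₃*w₃) + a₄*(y₄*w₄) = 0)
    (ezw : a₁*(z₁*w₁) + a₂*(z₂*w₂) + a₃*(z₃*w₃) + a₄*(z₄*w₄) = 0)
    (eyzw : a₁*(y₁*(z₁*w₁)) + a₂*(y₂*(z₂*w₂)) + a₃*(y₃*(z₃*w₃)) + a₄*(y₄*(z₄*w₄)) = 0) :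
    a₁ = 0 ∧ a₂ = 0 ∧ a₃ = 0 ∧ a₄ = 0 := by
  have k1 : a₁ * ((y₁-y₂)*((z₁-z₃)*(w₁-w₄))) = 0 := by
    linear_combination eyzw - w₄*eyz - z₃*eyw - y₂*ezw + (z₃*w₄)*ey + (y₂*w₄)*ez + (y₂*z₃)*ew - (y₂*z₃*w₄)*e1
  have k2 : a₂ * ((y₂-y₁)*((z₂-z₃)*(w₂-w₄))) = 0 := by
    linear_combination eyzw - w₄*eyz - z₃*eyw - y₁*ezw + (z₃*w₄)*ey + (y₁*w₄)*ez + (y₁*z₃)*ew - (y₁*z₃*w₄)*e1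
  have k3 : a₃ * ((y₃-y₁)*((z₃-z₂)*(w₃-w₄))) = 0 := by
    linear_combination eyzw - w₄*eyz - z₂*eyw - y₁*ezw + (z₂*w₄)*ey + (y₁*w₄)*ez + (y₁*z₂)*ew - (y₁*z₂*w₄)*e1
  have k4 : a₄ * ((y₄-y₁)*((z₄-z₂)*(w₄-w₃))) = 0 := by
    linear_combination eyzw - w₃*eyz - z₂*eyw - y₁*ezw + (z₂*w₃)*ey + (y₁*w₃)*ez + (y₁*z₂)*ew - (y₁*z₂*w₃)*e1
  refine ⟨(mul_eq_zero.mp k1).resolve_right ?_, (mul_eq_zero.mp k2).resolve_right ?_,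
    (mul_eq_zero.mp k3).resolve_right ?_, (mul_eq_zero.mp k4).resolve_right ?_⟩
  · exact mul_ne_zero (sub_ne_zero_of_ne hy12) (mul_ne_zero (sub_ne_zero_of_ne hz13) (sub_ne_zero_of_ne hw14))
  · exact mul_ne_zero (sub_ne_zero_of_ne hy12.symm) (mul_ne_zero (sub_ne_zero_of_ne hz23) (sub_ne_zero_of_ne hw24))
  · exact mul_ne_zero (sub_ne_zero_of_ne hy13.symm) (mul_ne_zero (sub_ne_zero_of_ne hz23.symm) (sub_ne_zero_of_ne hw34))
  · exact mul_ne_zero (sub_ne_zero_of_ne hy14.symm) (mul_ne_zero (sub_ne_zero_of_ne hz24.symm) (sub_ne_zero_of_ne hw34.symm))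

lemma key3 (a₁ a₂ a₃ z₁ z₂ z₃ w₁ w₂ w₃ : K)
    (hz12 : z₁ ≠ z₂) (hz13 : z₁ ≠ z₃) (hw13 : w₁ ≠ w₃) (hw23 : w₂ ≠ w₃)
    (e1 : a₁ + a₂ + a₃ = 0)
    (ez : a₁*z₁ + a₂*z₂ + a₃*z₃ = 0)
    (ew : a₁*w₁ + a₂*w₂ + a₃*w₃ = 0)
    (ezw : a₁*(z₁*w₁) + a₂*(z₂*w₂) + a₃*(z₃*w₃) = 0) :
    a₁ = 0 ∧ a₂ = 0 ∧ a₃ = 0 := by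
  have k1 : a₁ * ((z₁-z₂)*(w₁-w₃)) = 0 := by
    linear_combination ezw - w₃*ez - z₂*ew + (z₂*w₃)*e1
  have k2 : a₂ * ((z₂-z₁)*(w₂-w₃)) = 0 := by
    linear_combination ezw - w₃*ez - z₁*ew + (z₁*w₃)*e1
  have k3 : a₃ * ((z₃-z₁)*(w₃-w₂)) = 0 := by
    linear_combination ezw - w₂*ez - z₁*ew + (z₁*w₂)*e1
  refine ⟨(mul_eq_zero.mp k1).resolve_right ?_, (mul_eq_zero.mp k2).resolve_right ?_,
    (mul_eq_zero.mp k3).resolve_right ?_⟩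
  · exact mul_ne_zero (sub_ne_zero_of_ne hz12) (sub_ne_zero_of_ne hw13)
  · exact mul_ne_zero (sub_ne_zero_of_ne hz12.symm) (sub_ne_zero_of_ne hw23)
  · exact mul_ne_zero (sub_ne_zero_of_ne hz13.symm) (sub_ne_zero_of_ne hw23.symm)

lemma frob_sum4 (q : ℕ)
    (hadd : ∀ u v : K, (u+v)^q = u^q + v^q) (hq0 : (0:K)^q = 0)
    {a₁ a₂ a₃ a₄ : K} (ha₁ : a₁^q = a₁) (ha₂ : a₂^q = a₂) (ha₃ : a₃^q = a₃) (ha₄ : a₄^q = a₄)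
    (t₁ t₂ t₃ t₄ : K) (h : a₁*t₁ + a₂*t₂ + a₃*t₃ + a₄*t₄ = 0) :
    a₁*t₁^q + a₂*t₂^q + a₃*t₃^q + a₄*t₄^q = 0 := by
  have h2 := congrArg (· ^ q) h
  simp only [hadd, mul_pow, ha₁, ha₂, ha₃, ha₄, hq0] at h2
  exact h2

lemma frob_sum3 (q : ℕ)
    (hadd : ∀ u v : K, (u+v)^q = u^q + v^q) (hq0 : (0:K)^q = 0)
    {a₁ a₂ a₃ : K} (ha₁ : a₁^q = a₁) (ha₂ : a₂^q = a₂) (ha₃ : a₃^q = a₃)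
    (t₁ t₂ t₃ : K) (h : a₁*t₁ + a₂*t₂ + a₃*t₃ = 0) :
    a₁*t₁^q + a₂*t₂^q + a₃*t₃^q = 0 := by
  have h2 := congrArg (· ^ q) h
  simp only [hadd, mul_pow, ha₁, ha₂, ha₃, hq0] at h2
  exact h2

lemma bridge4 (q : ℕ)
    (hadd : ∀ u v : K, (u+v)^q = u^q + v^q)
    (hcyc : ∀ u : K, ((u^q)^q)^q = u)
    (hq0 : (0:K)^q = 0)
    (hinj : ∀ a b : K, a^q = b^q → a = b)
    (a₁ a₂ a₃ a₄ x₁ x₂ x₃ x₄ : K)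
    (ha₁ : a₁^q = a₁) (ha₂ : a₂^q = a₂) (ha₃ : a₃^q = a₃) (ha₄ : a₄^q = a₄)
    (hx12 : x₁ ≠ x₂) (hx13 : x₁ ≠ x₃) (hx14 : x₁ ≠ x₄)
    (hx23 : x₂ ≠ x₃) (hx24 : x₂ ≠ x₄) (hx34 : x₃ ≠ x₄)
    (h0 : a₁ + a₂ + a₃ + a₄ = 0)
    (h1 : a₁*x₁ + a₂*x₂ + a₃*x₃ + a₄*x₄ = 0)
    (h2 : a₁*x₁^(q^2+q) + a₂*x₂^(q^2+q) + a₃*x₃^(q^2+q) + a₄*x₄^(q^2+q) = 0)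
    (h3 : a₁*x₁^(q^2+q+1) + a₂*x₂^(q^2+q+1) + a₃*x₃^(q^2+q+1) + a₄*x₄^(q^2+q+1) = 0) :
    a₁ = 0 ∧ a₂ = 0 ∧ a₃ = 0 ∧ a₄ = 0 := by
  have hpow : ∀ x : K, x^(q^2+q) = x^q*(x^q)^q := by
    intro x
    rw [show q^2+q = q+q*q from by ring, pow_add, pow_mul]
  have hpow3 : ∀ x : K, x^(q^2+q+1) = x*(x^q*(x^q)^q) := by
    intro x
    rw [show q^2+q+1 = 1+(q+q*q) from by ring, pow_add, pow_add, pow_mul, pow_one]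
  simp only [hpow] at h2
  simp only [hpow3] at h3
  have ez : a₁*x₁^q + a₂*x₂^q + a₃*x₃^q + a₄*x₄^q = 0 :=
    frob_sum4 q hadd hq0 ha₁ ha₂ ha₃ ha₄ _ _ _ _ h1
  have ew : a₁*(x₁^q)^q + a₂*(x₂^q)^q + a₃*(x₃^q)^q + a₄*(x₄^q)^q = 0 :=
    frob_sum4 q hadd hq0 ha₁ ha₂ ha₃ ha₄ _ _ _ _ ez
  have eyw : a₁*(x₁*(x₁^q)^q) + a₂*(x₂*(x₂^q)^q) + a₃*(x₃*(x₃^q)^q) + a₄*(x₄*(x₄^q)^q) = 0 := by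
    have t := frob_sum4 q hadd hq0 ha₁ ha₂ ha₃ ha₄ _ _ _ _ h2
    simp only [mul_pow, hcyc] at t
    linear_combination t
  have eyz : a₁*(x₁*x₁^q) + a₂*(x₂*x₂^q) + a₃*(x₃*x₃^q) + a₄*(x₄*x₄^q) = 0 := by
    have t := frob_sum4 q hadd hq0 ha₁ ha₂ ha₃ ha₄ _ _ _ _ eyw
    simp only [mul_pow, hcyc] at t
    linear_combination t
  have hz13 : x₁^q ≠ x₃^q := fun h => hx13 (hinj _ _ h)
  have hz23 : x₂^q ≠ x₃^q := fun h => hx23 (hinj _ _ h)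
  have hz24 : x₂^q ≠ x₄^q := fun h => hx24 (hinj _ _ h)
  have hw14 : (x₁^q)^q ≠ (x₄^q)^q := fun h => hx14 (hinj _ _ (hinj _ _ h))
  have hw24 : (x₂^q)^q ≠ (x₄^q)^q := fun h => hx24 (hinj _ _ (hinj _ _ h))
  have hw34 : (x₃^q)^q ≠ (x₄^q)^q := fun h => hx34 (hinj _ _ (hinj _ _ h))
  exact key4 a₁ a₂ a₃ a₄ x₁ x₂ x₃ x₄ (x₁^q) (x₂^q) (x₃^q) (x₄^q)
    ((x₁^q)^q) ((x₂^q)^q) ((x₃^q)^q) ((x₄^q)^q)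
    hx12 hx13 hx14 hz13 hz23 hz24 hw14 hw24 hw34
    h0 h1 ez ew eyz eyw h2 h3

lemma bridge3 (q : ℕ)
    (hadd : ∀ u v : K, (u+v)^q = u^q + v^q)
    (hq0 : (0:K)^q = 0)
    (hinj : ∀ a b : K, a^q = b^q → a = b)
    (a₁ a₂ a₃ b x₁ x₂ x₃ : K)
    (ha₁ : a₁^q = a₁) (ha₂ : a₂^q = a₂) (ha₃ : a₃^q = a₃)
    (hx12 : x₁ ≠ x₂) (hx13 : x₁ ≠ x₃) (hx23 : x₂ ≠ x₃)
    (h0 : a₁ + a₂ + a₃ = 0)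
    (h1 : a₁*x₁ + a₂*x₂ + a₃*x₃ = 0)
    (h2 : a₁*x₁^(q^2+q) + a₂*x₂^(q^2+q) + a₃*x₃^(q^2+q) = 0)
    (h3 : a₁*x₁^(q^2+q+1) + a₂*x₂^(q^2+q+1) + a₃*x₃^(q^2+q+1) + b = 0) :
    a₁ = 0 ∧ a₂ = 0 ∧ a₃ = 0 ∧ b = 0 := by
  have hpow : ∀ x : K, x^(q^2+q) = x^q*(x^q)^q := by
    intro x
    rw [show q^2+q = q+q*q from by ring, pow_add, pow_mul]
  simp only [hpow] at h2
  have ez : a₁*x₁^q + a₂*x₂^q + a₃*x₃^q = 0 :=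
    frob_sum3 q hadd hq0 ha₁ ha₂ ha₃ _ _ _ h1
  have ew : a₁*(x₁^q)^q + a₂*(x₂^q)^q + a₃*(x₃^q)^q = 0 :=
    frob_sum3 q hadd hq0 ha₁ ha₂ ha₃ _ _ _ ez
  have hz12 : x₁^q ≠ x₂^q := fun h => hx12 (hinj _ _ h)
  have hz13 : x₁^q ≠ x₃^q := fun h => hx13 (hinj _ _ h)
  have hw13 : (x₁^q)^q ≠ (x₃^q)^q := fun h => hx13 (hinj _ _ (hinj _ _ h))
  have hw23 : (x₂^q)^q ≠ (x₃^q)^q := fun h => hx23 (hinj _ _ (hinj _ _ h))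
  obtain ⟨k1, k2, k3⟩ := key3 a₁ a₂ a₃ (x₁^q) (x₂^q) (x₃^q) ((x₁^q)^q) ((x₂^q)^q) ((x₃^q)^q)
    hz12 hz13 hw13 hw23 h0 ez ew h2
  refine ⟨k1, k2, k3, ?_⟩
  rw [k1, k2, k3] at h3
  simpa using h3

lemma coords {Fq : Type} [Field Fq] [Algebra Fq K] (g : Fin 4 → Fq)
    (u₁ u₂ u₃ u₄ : Fin 4 → K)
    (hg : ∑ i, g i • ![u₁, u₂, u₃, u₄] i = 0) (j : Fin 4) :
    algebraMap Fq K (g 0) * u₁ j + algebraMap Fq K (g 1) * u₂ j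
      + algebraMap Fq K (g 2) * u₃ j + algebraMap Fq K (g 3) * u₄ j = 0 := by
  have t := congrFun hg j
  simp only [Finset.sum_apply, Fin.sum_univ_four, Pi.smul_apply, Matrix.cons_val_zero,
    Matrix.cons_val_one, Matrix.head_cons, Matrix.cons_val_two, Matrix.tail_cons,
    Matrix.cons_val_three, Algebra.smul_def, Pi.zero_apply] at t
  exact t

end Aux
/-- in PG(7,q) (vectors in K⁴ with K = F_{q³}, scalars F_q), the set
O = {(1, x, x^{q²+q}, x^{q²+q+1}) : x ∈ K} ∪ {(0,0,0,1)} has q³ + 1 points and no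
plane meets it in more than three points: its vectors are pairwise non-proportional
over F_q and any four distinct vectors of O are linearly independent over F_q. -/
theorem stmt17 (q : ℕ) (hq : ∃ p k : ℕ, p.Prime ∧ 0 < k ∧ q = p ^ k)
    (Fq K : Type) [Field Fq] [Fintype Fq] [Field K] [Fintype K] [Algebra Fq K]
    (hq' : Fintype.card Fq = q) (hK : Fintype.card K = q ^ 3) :
    let v : K → (Fin 4 → K) := fun x => ![1, x, x ^ (q ^ 2 + q), x ^ (q ^ 2 + q + 1)]
    let e : Fin 4 → K := ![0, 0, 0, 1]
    let S : Set (Fin 4 → K) := Set.range v ∪ {e}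
    S.ncard = q ^ 3 + 1 ∧
    (∀ u ∈ S, ∀ w ∈ S, u ≠ w → ∀ c : Fq, u ≠ c • w) ∧
    (∀ u₁ ∈ S, ∀ u₂ ∈ S, ∀ u₃ ∈ S, ∀ u₄ ∈ S,
      u₁ ≠ u₂ → u₁ ≠ u₃ → u₁ ≠ u₄ → u₂ ≠ u₃ → u₂ ≠ u₄ → u₃ ≠ u₄ →
      LinearIndependent Fq ![u₁, u₂, u₃, u₄]) := by
  obtain ⟨p, k, hp, hk, hqpk⟩ := hq
  intro v e S
  -- basic facts
  have hq0 : (0:K)^q = 0 := by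
    rw [hqpk]; exact zero_pow (pow_ne_zero k hp.pos.ne')
  haveI : CharP K (ringChar K) := ringChar.charP K
  have hcp : (ringChar K).Prime := CharP.char_is_prime K (ringChar K)
  obtain ⟨n, hn, hcard⟩ := FiniteField.card K (ringChar K)
  have hpchar : p = ringChar K := by
    have h1 : p ∣ ringChar K ^ (n:ℕ) := by
      rw [← hcard, hK, hqpk, ← pow_mul]
      exact dvd_pow_self p (by positivity)
    exact (Nat.prime_dvd_prime_iff_eq hp hcp).mp (hp.dvd_of_dvd_pow h1)
  haveI : CharP K p := hpchar ▸ ringChar.charP K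
  haveI := Fact.mk hp
  have hadd : ∀ u v : K, (u+v)^q = u^q + v^q := by
    intro u v; rw [hqpk]; exact add_pow_char_pow u v p k
  have hcyc : ∀ u : K, ((u^q)^q)^q = u := by
    intro u
    have h1 : u^(q*q*q) = ((u^q)^q)^q := by rw [pow_mul, pow_mul]
    rw [← h1, show q*q*q = Fintype.card K from by rw [hK]; ring]
    exact FiniteField.pow_card u
  have hinj : ∀ a b : K, a^q = b^q → a = b := by
    intro a b h
    have hfi : Function.Injective (iterateFrobenius K p k) := (iterateFrobenius K p k).injective
    apply hfi
    rw [iterateFrobenius_def, iterateFrobenius_def, ← hqpk]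
    exact h
  have halg : ∀ c : Fq, (algebraMap Fq K c)^q = algebraMap Fq K c := by
    intro c
    rw [← map_pow]
    congr 1
    rw [← hq']
    exact FiniteField.pow_card c
  have hinjalg : Function.Injective (algebraMap Fq K) := (algebraMap Fq K).injective
  have hvinj : Function.Injective v := by
    intro a b hab
    have := congrFun hab 1
    simpa [v] using this
  have henotin : e ∉ Set.range v := by
    rintro ⟨x, hx⟩
    have := congrFun hx 0
    simp [v, e] at this
  refine ⟨?_, ?_, ?_⟩
  · -- cardinality
    show (Set.range v ∪ {e}).ncard = q ^ 3 + 1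
    rw [Set.ncard_union_eq (Set.disjoint_singleton_right.mpr henotin) (Set.toFinite _)
      (Set.toFinite _), Set.ncard_singleton]
    congr 1
    rw [← Nat.card_coe_set_eq, Nat.card_range_of_injective hvinj,
      Nat.card_eq_fintype_card, hK]
  · -- pairwise non-proportional
    intro u hu w hw huw c heq
    replace hu : (∃ x, v x = u) ∨ u = e := hu
    replace hw : (∃ x, v x = w) ∨ w = e := hw
    rcases hu with ⟨x, rfl⟩ | rfl
    · rcases hw with ⟨y, rfl⟩ | rfl
      · have h1 : (1:K) = algebraMap Fq K c := by
          simpa [v, Algebra.smul_def] using congrFun heq 0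
        have h2 : x = algebraMap Fq K c * y := by
          simpa [v, Algebra.smul_def] using congrFun heq 1
        rw [← h1, one_mul] at h2
        exact huw (by rw [h2])
      · have := congrFun heq 0
        simp [v, e, Algebra.smul_def] at this
    · rcases hw with ⟨y, rfl⟩ | rfl
      · have h0 : (0:K) = algebraMap Fq K c := by
          simpa [e, v, Algebra.smul_def] using congrFun heq 0
        have h3 := congrFun heq 3
        simp [e, v, Algebra.smul_def, ← h0] at h3
      · exact huw rfl
  · -- four-point independence
    intro u₁ hu₁ u₂ hu₂ u₃ hu₃ u₄ hu₄ h12 h13 h14 h23 h24 h34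
    rw [Fintype.linearIndependent_iff]
    intro g hg
    replace hu₁ : (∃ x, v x = u₁) ∨ u₁ = e := hu₁
    replace hu₂ : (∃ x, v x = u₂) ∨ u₂ = e := hu₂
    replace hu₃ : (∃ x, v x = u₃) ∨ u₃ = e := hu₃
    replace hu₄ : (∃ x, v x = u₄) ∨ u₄ = e := hu₄
    have H := fun j => coords (K := K) g u₁ u₂ u₃ u₄ hg j
    rcases hu₁ with ⟨x₁, rfl⟩ | rfl
    · rcases hu₂ with ⟨x₂, rfl⟩ | rfl
      · rcases hu₃ with ⟨x₃, rfl⟩ | rfl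
        · rcases hu₄ with ⟨x₄, rfl⟩ | rfl
          · -- all four on the curve
            have hx12 : x₁ ≠ x₂ := fun h => h12 (by rw [h])
            have hx13 : x₁ ≠ x₃ := fun h => h13 (by rw [h])
            have hx14 : x₁ ≠ x₄ := fun h => h14 (by rw [h])
            have hx23 : x₂ ≠ x₃ := fun h => h23 (by rw [h])
            have hx24 : x₂ ≠ x₄ := fun h => h24 (by rw [h])
            have hx34 : x₃ ≠ x₄ := fun h => h34 (by rw [h])
            have h0 : algebraMap Fq K (g 0) + algebraMap Fq K (g 1) + algebraMap Fq K (g 2)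
                + algebraMap Fq K (g 3) = 0 := by
              have t := H 0
              simp only [v, Matrix.cons_val_zero] at t
              linear_combination t
            have h1 : algebraMap Fq K (g 0) * x₁ + algebraMap Fq K (g 1) * x₂
                + algebraMap Fq K (g 2) * x₃ + algebraMap Fq K (g 3) * x₄ = 0 := by
              have t := H 1
              simp only [v, Matrix.cons_val_one, Matrix.head_cons, Matrix.cons_val_zero] at t
              linear_combination t
            have h2 : algebraMap Fq K (g 0) * x₁^(q^2+q) + algebraMap Fq K (g 1) * x₂^(q^2+q)
                + algebraMap Fq K (g 2) * x₃^(q^2+q) + algebraMap Fq K (g 3) * x₄^(q^2+q) = 0 := by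
              have t := H 2
              simp only [v, Matrix.cons_val_two, Matrix.tail_cons, Matrix.head_cons] at t
              linear_combination t
            have h3 : algebraMap Fq K (g 0) * x₁^(q^2+q+1) + algebraMap Fq K (g 1) * x₂^(q^2+q+1)
                + algebraMap Fq K (g 2) * x₃^(q^2+q+1) + algebraMap Fq K (g 3) * x₄^(q^2+q+1) = 0 := by
              have t := H 3
              simp only [v, Matrix.cons_val_three, Matrix.tail_cons, Matrix.head_cons] at t
              linear_combination t
            obtain ⟨k1, k2, k3, k4⟩ := bridge4 q hadd hcyc hq0 hinj _ _ _ _ x₁ x₂ x₃ x₄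
              (halg _) (halg _) (halg _) (halg _) hx12 hx13 hx14 hx23 hx24 hx34 h0 h1 h2 h3
            intro i
            fin_cases i
            · exact hinjalg (by rw [map_zero]; exact k1)
            · exact hinjalg (by rw [map_zero]; exact k2)
            · exact hinjalg (by rw [map_zero]; exact k3)
            · exact hinjalg (by rw [map_zero]; exact k4)
          · -- u₄ = e
            have hx12 : x₁ ≠ x₂ := fun h => h12 (by rw [h])
            have hx13 : x₁ ≠ x₃ := fun h => h13 (by rw [h])
            have hx23 : x₂ ≠ x₃ := fun h => h23 (by rw [h])
            have h0 : algebraMap Fq K (g 0) + algebraMap Fq K (g 1) + algebraMap Fq K (g 2) = 0 := by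
              have t := H 0
              simp only [v, e, Matrix.cons_val_zero] at t
              linear_combination t
            have h1 : algebraMap Fq K (g 0) * x₁ + algebraMap Fq K (g 1) * x₂
                + algebraMap Fq K (g 2) * x₃ = 0 := by
              have t := H 1
              simp only [v, e, Matrix.cons_val_one, Matrix.head_cons, Matrix.cons_val_zero] at t
              linear_combination t
            have h2 : algebraMap Fq K (g 0) * x₁^(q^2+q) + algebraMap Fq K (g 1) * x₂^(q^2+q)
                + algebraMap Fq K (g 2) * x₃^(q^2+q) = 0 := by
              have t := H 2
              simp only [v, e, Matrix.cons_val_two, Matrix.tail_cons, Matrix.head_cons] at t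
              linear_combination t
            have h3 : algebraMap Fq K (g 0) * x₁^(q^2+q+1) + algebraMap Fq K (g 1) * x₂^(q^2+q+1)
                + algebraMap Fq K (g 2) * x₃^(q^2+q+1) + algebraMap Fq K (g 3) = 0 := by
              have t := H 3
              simp only [v, e, Matrix.cons_val_three, Matrix.tail_cons, Matrix.head_cons] at t
              linear_combination t
            obtain ⟨k1, k2, k3, k4⟩ := bridge3 q hadd hq0 hinj _ _ _ _ x₁ x₂ x₃
              (halg _) (halg _) (halg _) hx12 hx13 hx23 h0 h1 h2 h3
            intro i
            fin_cases i
            · exact hinjalg (by rw [map_zero]; exact k1)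
            · exact hinjalg (by rw [map_zero]; exact k2)
            · exact hinjalg (by rw [map_zero]; exact k3)
            · exact hinjalg (by rw [map_zero]; exact k4)
        · rcases hu₄ with ⟨x₄, rfl⟩ | rfl
          · -- u₃ = e
            have hx12 : x₁ ≠ x₂ := fun h => h12 (by rw [h])
            have hx14 : x₁ ≠ x₄ := fun h => h14 (by rw [h])
            have hx24 : x₂ ≠ x₄ := fun h => h24 (by rw [h])
            have h0 : algebraMap Fq K (g 0) + algebraMap Fq K (g 1) + algebraMap Fq K (g 3) = 0 := by
              have t := H 0
              simp only [v, e, Matrix.cons_val_zero] at t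
              linear_combination t
            have h1 : algebraMap Fq K (g 0) * x₁ + algebraMap Fq K (g 1) * x₂
                + algebraMap Fq K (g 3) * x₄ = 0 := by
              have t := H 1
              simp only [v, e, Matrix.cons_val_one, Matrix.head_cons, Matrix.cons_val_zero] at t
              linear_combination t
            have h2 : algebraMap Fq K (g 0) * x₁^(q^2+q) + algebraMap Fq K (g 1) * x₂^(q^2+q)
                + algebraMap Fq K (g 3) * x₄^(q^2+q) = 0 := by
              have t := H 2
              simp only [v, e, Matrix.cons_val_two, Matrix.tail_cons, Matrix.head_cons] at t
              linear_combination t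
            have h3 : algebraMap Fq K (g 0) * x₁^(q^2+q+1) + algebraMap Fq K (g 1) * x₂^(q^2+q+1)
                + algebraMap Fq K (g 3) * x₄^(q^2+q+1) + algebraMap Fq K (g 2) = 0 := by
              have t := H 3
              simp only [v, e, Matrix.cons_val_three, Matrix.tail_cons, Matrix.head_cons] at t
              linear_combination t
            obtain ⟨k1, k2, k3, k4⟩ := bridge3 q hadd hq0 hinj _ _ _ _ x₁ x₂ x₄
              (halg _) (halg _) (halg _) hx12 hx14 hx24 h0 h1 h2 h3
            intro i
            fin_cases i
            · exact hinjalg (by rw [map_zero]; exact k1)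
            · exact hinjalg (by rw [map_zero]; exact k2)
            · exact hinjalg (by rw [map_zero]; exact k4)
            · exact hinjalg (by rw [map_zero]; exact k3)
          · exact absurd rfl h34
      · rcases hu₃ with ⟨x₃, rfl⟩ | rfl
        · rcases hu₄ with ⟨x₄, rfl⟩ | rfl
          · -- u₂ = e
            have hx13 : x₁ ≠ x₃ := fun h => h13 (by rw [h])
            have hx14 : x₁ ≠ x₄ := fun h => h14 (by rw [h])
            have hx34 : x₃ ≠ x₄ := fun h => h34 (by rw [h])
            have h0 : algebraMap Fq K (g 0) + algebraMap Fq K (g 2) + algebraMap Fq K (g 3) = 0 := by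
              have t := H 0
              simp only [v, e, Matrix.cons_val_zero] at t
              linear_combination t
            have h1 : algebraMap Fq K (g 0) * x₁ + algebraMap Fq K (g 2) * x₃
                + algebraMap Fq K (g 3) * x₄ = 0 := by
              have t := H 1
              simp only [v, e, Matrix.cons_val_one, Matrix.head_cons, Matrix.cons_val_zero] at t
              linear_combination t
            have h2 : algebraMap Fq K (g 0) * x₁^(q^2+q) + algebraMap Fq K (g 2) * x₃^(q^2+q)
                + algebraMap Fq K (g 3) * x₄^(q^2+q) = 0 := by
              have t := H 2
              simp only [v, e, Matrix.cons_val_two, Matrix.tail_cons, Matrix.head_cons] at t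
              linear_combination t
            have h3 : algebraMap Fq K (g 0) * x₁^(q^2+q+1) + algebraMap Fq K (g 2) * x₃^(q^2+q+1)
                + algebraMap Fq K (g 3) * x₄^(q^2+q+1) + algebraMap Fq K (g 1) = 0 := by
              have t := H 3
              simp only [v, e, Matrix.cons_val_three, Matrix.tail_cons, Matrix.head_cons] at t
              linear_combination t
            obtain ⟨k1, k2, k3, k4⟩ := bridge3 q hadd hq0 hinj _ _ _ _ x₁ x₃ x₄
              (halg _) (halg _) (halg _) hx13 hx14 hx34 h0 h1 h2 h3
            intro i
            fin_cases i
            · exact hinjalg (by rw [map_zero]; exact k1)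
            · exact hinjalg (by rw [map_zero]; exact k4)
            · exact hinjalg (by rw [map_zero]; exact k2)
            · exact hinjalg (by rw [map_zero]; exact k3)
          · exact absurd rfl h24
        · exact absurd rfl h23
    · rcases hu₂ with ⟨x₂, rfl⟩ | rfl
      · rcases hu₃ with ⟨x₃, rfl⟩ | rfl
        · rcases hu₄ with ⟨x₄, rfl⟩ | rfl
          · -- u₁ = e
            have hx23 : x₂ ≠ x₃ := fun h => h23 (by rw [h])
            have hx24 : x₂ ≠ x₄ := fun h => h24 (by rw [h])
            have hx34 : x₃ ≠ x₄ := fun h => h34 (by rw [h])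
            have h0 : algebraMap Fq K (g 1) + algebraMap Fq K (g 2) + algebraMap Fq K (g 3) = 0 := by
              have t := H 0
              simp only [v, e, Matrix.cons_val_zero] at t
              linear_combination t
            have h1 : algebraMap Fq K (g 1) * x₂ + algebraMap Fq K (g 2) * x₃
                + algebraMap Fq K (g 3) * x₄ = 0 := by
              have t := H 1
              simp only [v, e, Matrix.cons_val_one, Matrix.head_cons, Matrix.cons_val_zero] at t
              linear_combination t
            have h2 : algebraMap Fq K (g 1) * x₂^(q^2+q) + algebraMap Fq K (g 2) * x₃^(q^2+q)
                + algebraMap Fq K (g 3) * x₄^(q^2+q) = 0 := by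
              have t := H 2
              simp only [v, e, Matrix.cons_val_two, Matrix.tail_cons, Matrix.head_cons] at t
              linear_combination t
            have h3 : algebraMap Fq K (g 1) * x₂^(q^2+q+1) + algebraMap Fq K (g 2) * x₃^(q^2+q+1)
                + algebraMap Fq K (g 3) * x₄^(q^2+q+1) + algebraMap Fq K (g 0) = 0 := by
              have t := H 3
              simp only [v, e, Matrix.cons_val_three, Matrix.tail_cons, Matrix.head_cons] at t
              linear_combination t
            obtain ⟨k1, k2, k3, k4⟩ := bridge3 q hadd hq0 hinj _ _ _ _ x₂ x₃ x₄
              (halg _) (halg _) (halg _) hx23 hx24 hx34 h0 h1 h2 h3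
            intro i
            fin_cases i
            · exact hinjalg (by rw [map_zero]; exact k4)
            · exact hinjalg (by rw [map_zero]; exact k1)
            · exact hinjalg (by rw [map_zero]; exact k2)
            · exact hinjalg (by rw [map_zero]; exact k3)
          · exact absurd rfl h14
        · exact absurd rfl h13
      · exact absurd rfl h12
end
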